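/- arXiv:1903.04264 — 5 statements merged into one kernel-verified Lean document; each statement's English description precedes it below -/
import Mathlib

section
/- Let p = ef+1 be an odd prime and m ≥ 1. Then Z/2p^m Z is the disjoint union of {0}, {p^m}, and the sets p^{m-j} D_i^{(2p^j)} and 2 p^{m-j} D_i^{(2p^j)} for 1 ≤ j ≤ m and 0 ≤ i < d_j, where D_i^{(2p^j)} are the generalized cyclotomic classes of order d_j = p^{j-1} f modulo 2p^j. -/
open Polynomial Finset

noncomputable section

/-- Generalized cyclotomic class `D_i` of order `d` modulo `m`,
    given by the coset `g^i ⟨g^d⟩` with `e` elements. -/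
def Dset (m g d e i : ℕ) : Finset (ZMod m) :=
  (Finset.range e).image (fun t => (g : ZMod m) ^ (i + t * d))

/-- `E_i^{(m)}` evaluated at `α`. -/
def Esum {F : Type*} [Field F] (m g d e i : ℕ) (α : F) : F :=
  ∑ t ∈ Dset m g d e i, α ^ t.val

/-- `H_k^{(p^j)}` evaluated at `α`. -/
def Hsum {F : Type*} [Field F] (p g e f j k : ℕ) (α : F) : F :=
  ∑ i ∈ Finset.range (p ^ (j - 1) * f / 2),
    Esum (p ^ j) g (p ^ (j - 1) * f) e ((i + k) % (p ^ (j - 1) * f)) α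

/-- `T_k^{(p^m)}` evaluated at `α`. -/
def Tsum {F : Type*} [Field F] (p g e f m k : ℕ) (α : F) : F :=
  ∑ j ∈ Finset.Icc 1 m, Hsum p g e f j k (α ^ p ^ (m - j))

/-- The set `C_1^{(2p^n)}`. -/
def Cone (p g e f b n : ℕ) : Finset (ZMod (2 * p ^ n)) :=
  insert 0 <| (Finset.Icc 1 n).biUnion fun j =>
    (Finset.range (p ^ (j - 1) * f / 2)).biUnion fun i =>
      (Dset (2 * p ^ j) g (p ^ (j - 1) * f) e ((i + b) % (p ^ (j - 1) * f))).image
          (fun x => ((p ^ (n - j) * x.val : ℕ) : ZMod (2 * p ^ n))) ∪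
      (Dset (2 * p ^ j) g (p ^ (j - 1) * f) e ((i + b) % (p ^ (j - 1) * f))).image
          (fun x => ((2 * p ^ (n - j) * x.val : ℕ) : ZMod (2 * p ^ n)))

/-- The set `C_0^{(2p^n)}`. -/
def Czero (p g e f b n : ℕ) : Finset (ZMod (2 * p ^ n)) :=
  insert ((p ^ n : ℕ) : ZMod (2 * p ^ n)) <| (Finset.Icc 1 n).biUnion fun j =>
    (Finset.Ico (p ^ (j - 1) * f / 2) (p ^ (j - 1) * f)).biUnion fun i =>
      (Dset (2 * p ^ j) g (p ^ (j - 1) * f) e ((i + b) % (p ^ (j - 1) * f))).image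
          (fun x => ((p ^ (n - j) * x.val : ℕ) : ZMod (2 * p ^ n))) ∪
      (Dset (2 * p ^ j) g (p ^ (j - 1) * f) e ((i + b) % (p ^ (j - 1) * f))).image
          (fun x => ((2 * p ^ (n - j) * x.val : ℕ) : ZMod (2 * p ^ n)))

/-- The set `C̃_1^{(2p^n)}`. -/
def Ctilde1 (p g e f b n : ℕ) : Finset (ZMod (2 * p ^ n)) :=
  insert 0 <| (Finset.Icc 1 n).biUnion fun j =>
    ((Finset.range (p ^ (j - 1) * f / 2)).biUnion fun i =>
      (Dset (2 * p ^ j) g (p ^ (j - 1) * f) e ((i + b) % (p ^ (j - 1) * f))).image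
          (fun x => ((p ^ (n - j) * x.val : ℕ) : ZMod (2 * p ^ n)))) ∪
    ((Finset.Ico (p ^ (j - 1) * f / 2) (p ^ (j - 1) * f)).biUnion fun i =>
      (Dset (2 * p ^ j) g (p ^ (j - 1) * f) e ((i + b) % (p ^ (j - 1) * f))).image
          (fun x => ((2 * p ^ (n - j) * x.val : ℕ) : ZMod (2 * p ^ n))))

/-- Evaluation of the generating polynomial `S` of `s^∞` at `α`. -/
def Seval {F : Type*} [Field F] (p g e f b n : ℕ) (α : F) : F :=
  ∑ t ∈ Cone p g e f b n, α ^ t.val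

/-- Evaluation of the generating polynomial `S̃` of `s̃^∞` at `α`. -/
def Steval {F : Type*} [Field F] (p g e f b n : ℕ) (α : F) : F :=
  ∑ t ∈ Ctilde1 p g e f b n, α ^ t.val

/-- The binary sequence `s^∞` of period `2p^n`. -/
def seqS (p g e f b n : ℕ) : ℕ → ZMod 2 :=
  fun i => if (i : ZMod (2 * p ^ n)) ∈ Cone p g e f b n then 1 else 0

/-- The binary sequence `s̃^∞` of period `2p^n`. -/
def seqStilde (p g e f b n : ℕ) : ℕ → ZMod 2 :=
  fun i => if (i : ZMod (2 * p ^ n)) ∈ Ctilde1 p g e f b n then 1 else 0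

/-- Generating polynomial of one period of a binary sequence. -/
def genPoly (N : ℕ) (s : ℕ → ZMod 2) : Polynomial (ZMod 2) :=
  ∑ k ∈ Finset.range N, Polynomial.C (s k) * Polynomial.X ^ k

/-- Linear complexity: the length of a shortest linear recurrence generating `s`. -/
def linComplexity (s : ℕ → ZMod 2) : ℕ :=
  sInf {L | ∃ c : Fin L → ZMod 2, ∀ n, s (n + L) = ∑ i : Fin L, c i * s (n + i)}

lemma aux_units (Mo No : ℕ) [NeZero Mo] [NeZero No] (hMN : Mo ∣ No) (g : ℕ)
    (hg : orderOf (g : ZMod No) = Nat.totient No) :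
    orderOf (g : ZMod Mo) = Nat.totient Mo ∧
      ∀ v : ZMod Mo, IsUnit v → ∃ k, v = (g : ZMod Mo) ^ k := by
  have hNo : (0:ℕ) < Nat.totient No := Nat.totient_pos.mpr (Nat.pos_of_ne_zero (NeZero.ne No))
  have hfin : IsOfFinOrder (g : ZMod No) := by
    rw [← orderOf_pos_iff, hg]; exact hNo
  obtain ⟨gu, hgu'⟩ := hfin.isUnit
  have hord : orderOf gu = Nat.totient No := by rw [← hg, ← hgu', orderOf_units]
  have htop : Subgroup.zpowers gu = ⊤ := by
    apply Subgroup.eq_top_of_card_eq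
    rw [Nat.card_zpowers, hord, Nat.card_eq_fintype_card, ZMod.card_units_eq_totient]
  have hφ : Function.Surjective (ZMod.unitsMap hMN) := ZMod.unitsMap_surjective hMN
  have himg : Subgroup.zpowers (ZMod.unitsMap hMN gu) = ⊤ := by
    rw [← MonoidHom.map_zpowers, htop]
    exact Subgroup.map_top_of_surjective _ hφ
  have hcoe : ((ZMod.unitsMap hMN gu : (ZMod Mo)ˣ) : ZMod Mo) = (g : ZMod Mo) := by
    rw [ZMod.unitsMap_def, Units.coe_map]
    show ZMod.castHom hMN (ZMod Mo) (gu : ZMod No) = _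
    rw [hgu', map_natCast]
  constructor
  · have h1 : orderOf (ZMod.unitsMap hMN gu) = Nat.totient Mo := by
      rw [orderOf_eq_card_of_forall_mem_zpowers (fun x => himg ▸ Subgroup.mem_top x),
        Nat.card_eq_fintype_card, ZMod.card_units_eq_totient]
    rw [← hcoe, orderOf_units, h1]
  · intro v hv
    obtain ⟨vu, rfl⟩ := hv
    have hmem : vu ∈ Subgroup.zpowers (ZMod.unitsMap hMN gu) := himg ▸ Subgroup.mem_top vu
    rw [← mem_powers_iff_mem_zpowers] at hmem
    obtain ⟨k, hk⟩ := hmem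
    refine ⟨k, ?_⟩
    rw [← hk, ← hcoe]
    push_cast
    rfl

lemma aux_notdvd {p m j c v : ℕ} (hp : p.Prime) (hodd : Odd p) (h1j : 1 ≤ j) (hjm : j ≤ m)
    (hc : c = 1 ∨ c = 2) (hv : Nat.Coprime v (2 * p ^ j)) :
    ¬ p ^ m ∣ c * p ^ (m - j) * v := by
  intro hdvd
  have hp3 : 3 ≤ p := by
    rcases hodd with ⟨k, hk⟩
    have := hp.two_le
    omega
  have h2 : p ^ (m - j) * p ^ j ∣ p ^ (m - j) * (c * v) := by
    have e1 : p ^ (m - j) * p ^ j = p ^ m := by rw [← pow_add, Nat.sub_add_cancel hjm]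
    have e2 : p ^ (m - j) * (c * v) = c * p ^ (m - j) * v := by ring
    rw [e1, e2]; exact hdvd
  have h3 : p ^ j ∣ c * v := (Nat.mul_dvd_mul_iff_left (pow_pos hp.pos (m - j))).mp h2
  have h4 : p ∣ c * v := dvd_trans (dvd_pow_self p (by omega : j ≠ 0)) h3
  rcases hp.dvd_mul.mp h4 with h | h
  · have := Nat.le_of_dvd (by omega) h
    omega
  · have hpd : p ∣ 2 * p ^ j := Dvd.dvd.mul_left (dvd_pow_self p (by omega : j ≠ 0)) 2
    have := Nat.dvd_gcd h hpd
    rw [Nat.Coprime] at hv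
    rw [hv] at this
    have := Nat.le_of_dvd one_pos this
    omega

lemma aux_jlt {p m j j' c c' v v' : ℕ} (hp : p.Prime) (hodd : Odd p)
    (h1j : 1 ≤ j) (hjm : j ≤ m) (h1j' : 1 ≤ j')
    (hc : c = 1 ∨ c = 2) (hv : Nat.Coprime v (2 * p ^ j))
    (hlt : j' < j)
    (heq : c * p ^ (m - j) * v ≡ c' * p ^ (m - j') * v' [MOD 2 * p ^ m]) : False := by
  have hp3 : 3 ≤ p := by
    rcases hodd with ⟨k, hk⟩; have := hp.two_le; omega
  have hd1 : p ^ (m - j + 1) ∣ 2 * p ^ m :=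
    Dvd.dvd.mul_left (pow_dvd_pow p (by omega : m - j + 1 ≤ m)) 2
  have h2 := Nat.ModEq.of_dvd hd1 heq
  have hrhs : c' * p ^ (m - j') * v' ≡ 0 [MOD p ^ (m - j + 1)] := by
    rw [Nat.modEq_zero_iff_dvd]
    exact Dvd.dvd.mul_right (Dvd.dvd.mul_left (pow_dvd_pow p (by omega : m - j + 1 ≤ m - j')) c') v'
  have h5 : p ^ (m - j + 1) ∣ c * p ^ (m - j) * v := Nat.modEq_zero_iff_dvd.mp (h2.trans hrhs)
  have h6 : p ^ (m - j) * p ∣ p ^ (m - j) * (c * v) := by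
    have e1 : p ^ (m - j) * p = p ^ (m - j + 1) := by rw [pow_succ]
    have e2 : p ^ (m - j) * (c * v) = c * p ^ (m - j) * v := by ring
    rw [e1, e2]; exact h5
  have h7 : p ∣ c * v := (Nat.mul_dvd_mul_iff_left (pow_pos hp.pos (m - j))).mp h6
  rcases hp.dvd_mul.mp h7 with h | h
  · have := Nat.le_of_dvd (by omega) h
    omega
  · have hpd : p ∣ 2 * p ^ j := Dvd.dvd.mul_left (dvd_pow_self p (by omega : j ≠ 0)) 2
    have hg := Nat.dvd_gcd h hpd
    rw [Nat.Coprime] at hv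
    rw [hv] at hg
    have := Nat.le_of_dvd one_pos hg
    omega

lemma aux_unique {p m j j' c c' v v' : ℕ} (hp : p.Prime) (hodd : Odd p)
    (h1j : 1 ≤ j) (hjm : j ≤ m) (h1j' : 1 ≤ j') (hj'm : j' ≤ m)
    (hc : c = 1 ∨ c = 2) (hc' : c' = 1 ∨ c' = 2)
    (hv : Nat.Coprime v (2 * p ^ j)) (hv' : Nat.Coprime v' (2 * p ^ j'))
    (hvlt : v < 2 * p ^ j) (hv'lt : v' < 2 * p ^ j')
    (heq : c * p ^ (m - j) * v ≡ c' * p ^ (m - j') * v' [MOD 2 * p ^ m]) :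
    j = j' ∧ c = c' ∧ v = v' := by
  have hp3 : 3 ≤ p := by
    rcases hodd with ⟨k, hk⟩; have := hp.two_le; omega
  -- j = j'
  have hjj : j = j' := by
    rcases lt_trichotomy j j' with h | h | h
    · exact absurd (aux_jlt hp hodd h1j' hj'm h1j hc' hv' h heq.symm) not_false
    · exact h
    · exact absurd (aux_jlt hp hodd h1j hjm h1j' hc hv h heq) not_false
  subst hjj
  -- parities
  have hv2 : v % 2 = 1 := Nat.odd_iff.mp (Nat.Coprime.odd_of_right
    (Nat.Coprime.coprime_dvd_right (dvd_mul_right 2 _) hv))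
  have hv'2 : v' % 2 = 1 := Nat.odd_iff.mp (Nat.Coprime.odd_of_right
    (Nat.Coprime.coprime_dvd_right (dvd_mul_right 2 _) hv'))
  have hpk2 : p ^ (m - j) % 2 = 1 := Nat.odd_iff.mp (hodd.pow)
  have h2 : (c * p ^ (m - j) * v) % 2 = (c' * p ^ (m - j) * v') % 2 :=
    Nat.ModEq.of_dvd (dvd_mul_right 2 _) heq
  have hcc : c = c' := by
    rw [Nat.mul_mod, Nat.mul_mod c, hv2, hpk2, Nat.mul_mod (c' * p ^ (m - j)),
      Nat.mul_mod c', hv'2, hpk2] at h2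
    omega
  subst hcc
  refine ⟨rfl, rfl, ?_⟩
  have key : c * v ≡ c * v' [MOD 2 * p ^ j] := by
    have h3 : p ^ (m - j) * (c * v) ≡ p ^ (m - j) * (c * v') [MOD p ^ (m - j) * (2 * p ^ j)] := by
      have e1 : p ^ (m - j) * (c * v) = c * p ^ (m - j) * v := by ring
      have e2 : p ^ (m - j) * (c * v') = c * p ^ (m - j) * v' := by ring
      have e3 : p ^ (m - j) * (2 * p ^ j) = 2 * p ^ m := by
        rw [mul_comm 2 (p ^ j), ← mul_assoc, ← pow_add, Nat.sub_add_cancel hjm, mul_comm]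
      rw [e1, e2, e3]; exact heq
    exact Nat.ModEq.mul_left_cancel' (pow_ne_zero _ hp.pos.ne') h3
  have keyj : v ≡ v' [MOD p ^ j] := by
    rcases hc with rfl | rfl
    · exact Nat.ModEq.of_dvd (dvd_mul_left _ _) (by simpa using key)
    · have h4 : 2 * v ≡ 2 * v' [MOD 2 * p ^ j] := key
      exact Nat.ModEq.mul_left_cancel' two_ne_zero h4
  have key2 : v ≡ v' [MOD 2] := by
    show v % 2 = v' % 2
    omega
  have hfin : v ≡ v' [MOD 2 * p ^ j] :=
    (Nat.modEq_and_modEq_iff_modEq_mul (Nat.coprime_two_left.mpr hodd.pow)).mp ⟨key2, keyj⟩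
  have : v % (2 * p ^ j) = v' % (2 * p ^ j) := hfin
  rw [Nat.mod_eq_of_lt hvlt, Nat.mod_eq_of_lt hv'lt] at this
  exact this

lemma aux_pow_iff {M : Type*} [Monoid M] {x : M} (hx : IsUnit x) (n m : ℕ) :
    x ^ n = x ^ m ↔ n ≡ m [MOD orderOf x] := by
  obtain ⟨u, rfl⟩ := hx
  rw [← Units.val_pow_eq_pow_val, ← Units.val_pow_eq_pow_val, Units.val_inj,
    orderOf_units]
  exact pow_eq_pow_iff_modEq

/-- `Z/2p^m` is the disjoint union of `{0}`, `{p^m}`, and the sets `p^{m-j} D_i^{(2p^j)}`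
and `2 p^{m-j} D_i^{(2p^j)}` for `1 ≤ j ≤ m`, `0 ≤ i < d_j`. -/
theorem stmt5 (p e f m g : ℕ) (hp : p.Prime) (hodd : Odd p) (hpef : p = e * f + 1)
    (he : 0 < e) (hf : 0 < f) (hm : 1 ≤ m) (hgodd : Odd g)
    (hg : orderOf (g : ZMod (2 * p ^ m)) = Nat.totient (2 * p ^ m)) :
    (∀ j, 1 ≤ j → j ≤ m → ∀ i < p ^ (j - 1) * f, ∀ c ∈ ({1, 2} : Finset ℕ),
      ∀ x ∈ (Dset (2 * p ^ j) g (p ^ (j - 1) * f) e i).image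
          (fun y => ((c * p ^ (m - j) * y.val : ℕ) : ZMod (2 * p ^ m))),
        x ≠ 0 ∧ x ≠ ((p ^ m : ℕ) : ZMod (2 * p ^ m))) ∧
    ∀ x : ZMod (2 * p ^ m), x ≠ 0 → x ≠ ((p ^ m : ℕ) : ZMod (2 * p ^ m)) →
      ∃! t : ℕ × ℕ × ℕ, 1 ≤ t.1 ∧ t.1 ≤ m ∧ t.2.1 < p ^ (t.1 - 1) * f ∧
        t.2.2 ∈ ({1, 2} : Finset ℕ) ∧
        x ∈ (Dset (2 * p ^ t.1) g (p ^ (t.1 - 1) * f) e t.2.1).image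
          (fun y => ((t.2.2 * p ^ (m - t.1) * y.val : ℕ) : ZMod (2 * p ^ m))) := by
  have hp3 : 3 ≤ p := by
    rcases hodd with ⟨k, hk⟩; have := hp.two_le; omega
  have hppos : 0 < p := by omega
  haveI hNm : NeZero (2 * p ^ m) := ⟨by positivity⟩
  have htot : ∀ j, 1 ≤ j → Nat.totient (2 * p ^ j) = e * (p ^ (j - 1) * f) := by
    intro j h1j
    rw [Nat.totient_mul ((Nat.coprime_two_left).mpr (hodd.pow)), Nat.totient_two,
      Nat.totient_prime_pow hp (by omega : 0 < j), one_mul]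
    have h1 : p - 1 = e * f := by omega
    rw [h1]; ring
  have key : ∀ j, 1 ≤ j → j ≤ m →
      orderOf (g : ZMod (2 * p ^ j)) = e * (p ^ (j - 1) * f) ∧
      (∀ v : ZMod (2 * p ^ j), IsUnit v → ∃ k, v = (g : ZMod (2 * p ^ j)) ^ k) := by
    intro j h1j hjm
    haveI : NeZero (2 * p ^ j) := ⟨by positivity⟩
    have hd : (2 * p ^ j : ℕ) ∣ 2 * p ^ m := mul_dvd_mul_left 2 (pow_dvd_pow p hjm)
    obtain ⟨h1, h2⟩ := aux_units (2 * p ^ j) (2 * p ^ m) hd g hg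
    exact ⟨by rw [h1, htot j h1j], h2⟩
  have hdpos : ∀ j : ℕ, 0 < p ^ (j - 1) * f := fun j => Nat.mul_pos (pow_pos hppos _) hf
  have hval : ∀ j, 1 ≤ j → j ≤ m → ∀ s : ℕ,
      Nat.Coprime (((g : ZMod (2 * p ^ j)) ^ s).val) (2 * p ^ j) ∧
      ((g : ZMod (2 * p ^ j)) ^ s).val < 2 * p ^ j := by
    intro j h1j hjm s
    haveI : NeZero (2 * p ^ j) := ⟨by positivity⟩
    have hgu : IsUnit (g : ZMod (2 * p ^ j)) := by
      have h1 := (key j h1j hjm).1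
      have h2 : IsOfFinOrder (g : ZMod (2 * p ^ j)) := by
        rw [← orderOf_pos_iff, h1]
        exact Nat.mul_pos he (hdpos j)
      exact h2.isUnit
    have hgsu : IsUnit ((g : ZMod (2 * p ^ j)) ^ s) := hgu.pow s
    refine ⟨?_, ZMod.val_lt _⟩
    have h3 := ZMod.val_coe_unit_coprime hgsu.unit
    rwa [IsUnit.unit_spec] at h3
  have hmem : ∀ j i c (x : ZMod (2 * p ^ m)),
      (x ∈ (Dset (2 * p ^ j) g (p ^ (j - 1) * f) e i).image
          (fun y => ((c * p ^ (m - j) * y.val : ℕ) : ZMod (2 * p ^ m)))) ↔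
      ∃ t < e, x = ((c * p ^ (m - j) *
        (((g : ZMod (2 * p ^ j)) ^ (i + t * (p ^ (j - 1) * f))).val) : ℕ) : ZMod (2 * p ^ m)) := by
    intro j i c x
    simp only [Dset, Finset.mem_image, Finset.mem_range, exists_exists_and_eq_and]
    constructor
    · rintro ⟨t, ht, rfl⟩; exact ⟨t, ht, rfl⟩
    · rintro ⟨t, ht, rfl⟩; exact ⟨t, ht, rfl⟩
  -- the "not zero / not p^m" fact, reused
  have hne : ∀ j, 1 ≤ j → j ≤ m → ∀ c, (c = 1 ∨ c = 2) → ∀ v : ℕ,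
      Nat.Coprime v (2 * p ^ j) →
      ((c * p ^ (m - j) * v : ℕ) : ZMod (2 * p ^ m)) ≠ 0 ∧
      ((c * p ^ (m - j) * v : ℕ) : ZMod (2 * p ^ m)) ≠ ((p ^ m : ℕ) : ZMod (2 * p ^ m)) := by
    intro j h1j hjm c hc2 v hcop
    constructor
    · rw [Ne, ZMod.natCast_eq_zero_iff]
      intro hdvd
      exact aux_notdvd hp hodd h1j hjm hc2 hcop (dvd_trans (dvd_mul_left (p ^ m) 2) hdvd)
    · rw [Ne, ZMod.natCast_eq_natCast_iff]
      intro hmod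
      have h4 : c * p ^ (m - j) * v ≡ 0 [MOD p ^ m] :=
        (Nat.ModEq.of_dvd (dvd_mul_left (p ^ m) 2) hmod).trans
          (Nat.modEq_zero_iff_dvd.mpr dvd_rfl)
      exact aux_notdvd hp hodd h1j hjm hc2 hcop (Nat.modEq_zero_iff_dvd.mp h4)
  constructor
  · intro j h1j hjm i _ c hc x hx
    have hc2 : c = 1 ∨ c = 2 := by simpa using hc
    rw [hmem] at hx
    obtain ⟨t, ht, rfl⟩ := hx
    exact hne j h1j hjm c hc2 _ (hval j h1j hjm (i + t * (p ^ (j - 1) * f))).1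
  · intro x hx0 hxp
    have hnx : ((x.val : ℕ) : ZMod (2 * p ^ m)) = x := ZMod.natCast_rightInverse x
    set n := x.val with hn_def
    have hn0 : n ≠ 0 := fun h => hx0 (by rw [← hnx, h, Nat.cast_zero])
    have hnlt : n < 2 * p ^ m := ZMod.val_lt x
    have hnp : n ≠ p ^ m := fun h => hxp (by rw [← hnx, h])
    set a := n.factorization p with ha_def
    set u0 := n / p ^ a with hu0_def
    have hord : p ^ a * u0 = n := Nat.ordProj_mul_ordCompl_eq_self n p
    have hpu0 : ¬ p ∣ u0 := Nat.not_dvd_ordCompl hp hn0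
    have hu0 : u0 ≠ 0 := by
      intro h; rw [h, mul_zero] at hord; exact hn0 hord.symm
    have ham : a < m := by
      by_contra hcon
      push_neg at hcon
      have hdvd : p ^ m ∣ n := dvd_trans (pow_dvd_pow p hcon) (Nat.ordProj_dvd n p)
      obtain ⟨q, hq⟩ := hdvd
      have hq0 : q ≠ 0 := by rintro rfl; rw [mul_zero] at hq; exact hn0 hq
      have hq2 : q < 2 := by
        by_contra hq2
        push_neg at hq2
        have : p ^ m * 2 ≤ p ^ m * q := Nat.mul_le_mul_left _ hq2
        omega
      interval_cases q
      · omega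
      · rw [mul_one] at hq; exact hnp hq
    set j := m - a with hj_def
    have h1j : 1 ≤ j := by omega
    have hjm : j ≤ m := by omega
    have hmj : m - j = a := by omega
    haveI : NeZero (2 * p ^ j) := ⟨by positivity⟩
    obtain ⟨c, w, hc2, hwodd, hpw, hcw⟩ : ∃ c w, (c = 1 ∨ c = 2) ∧ Odd w ∧ ¬ p ∣ w ∧
        c * w ≡ u0 [MOD 2 * p ^ j] := by
      rcases Nat.even_or_odd u0 with heven | hoddu
      · obtain ⟨u', hu'⟩ := heven
        have hu0eq : u0 = 2 * u' := by omega
        have hpu' : ¬ p ∣ u' := fun h => hpu0 (hu0eq ▸ Dvd.dvd.mul_left h 2)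
        rcases Nat.even_or_odd u' with hu'e | hu'o
        · refine ⟨2, u' + p ^ j, Or.inr rfl, hu'e.add_odd (hodd.pow), ?_, ?_⟩
          · intro hdv
            exact hpu' ((Nat.dvd_add_right (dvd_pow_self p (by omega : j ≠ 0))).mp
              (by rwa [add_comm] at hdv))
          · have h5 : (u' + p ^ j) % p ^ j = u' % p ^ j := Nat.add_mod_right u' (p ^ j)
            have h6 : u' + p ^ j ≡ u' [MOD p ^ j] := h5
            have h7 := Nat.ModEq.mul_left' (c := 2) h6
            rw [hu0eq]
            exact h7
        · exact ⟨2, u', Or.inr rfl, hu'o, hpu', by rw [hu0eq]⟩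
      · exact ⟨1, u0, Or.inl rfl, hoddu, hpu0, by rw [one_mul]⟩
    have hcopw : Nat.Coprime w (2 * p ^ j) :=
      Nat.Coprime.mul_right hwodd.coprime_two_right
        (Nat.Coprime.pow_right j ((hp.coprime_iff_not_dvd).mpr hpw).symm)
    have hunit : IsUnit ((w : ℕ) : ZMod (2 * p ^ j)) :=
      (ZMod.isUnit_iff_coprime w (2 * p ^ j)).mpr hcopw
    obtain ⟨k, hk⟩ := (key j h1j hjm).2 _ hunit
    set d := p ^ (j - 1) * f with hd_def
    have hedpos : 0 < e * d := Nat.mul_pos he (hdpos j)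
    set k' := k % (e * d) with hk'_def
    set i := k' % d with hi_def
    set t := k' / d with ht_def
    have hi : i < d := Nat.mod_lt _ (hdpos j)
    have ht : t < e := by
      rw [ht_def]
      rw [Nat.div_lt_iff_lt_mul (hdpos j)]
      exact Nat.mod_lt _ hedpos
    have hitd : i + t * d = k' := Nat.mod_add_div' k' d
    have hgu : IsUnit (g : ZMod (2 * p ^ j)) := by
      have h1 := (key j h1j hjm).1
      have h2 : IsOfFinOrder (g : ZMod (2 * p ^ j)) := by
        rw [← orderOf_pos_iff, h1]
        exact Nat.mul_pos he (hdpos j)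
      exact h2.isUnit
    have heqpow : (g : ZMod (2 * p ^ j)) ^ (i + t * d) = ((w : ℕ) : ZMod (2 * p ^ j)) := by
      rw [hitd, hk, aux_pow_iff hgu, (key j h1j hjm).1]
      exact Nat.mod_modEq k (e * d)
    set v := ((g : ZMod (2 * p ^ j)) ^ (i + t * d)).val with hv_def
    have hvw : v ≡ w [MOD 2 * p ^ j] := by
      rw [hv_def, heqpow, ZMod.val_natCast]
      exact Nat.mod_modEq w _
    have e3 : p ^ (m - j) * p ^ j = p ^ m := by rw [← pow_add, Nat.sub_add_cancel hjm]
    have hstep1 : c * p ^ (m - j) * v ≡ c * p ^ (m - j) * w [MOD 2 * p ^ m] := by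
      have h8 := Nat.ModEq.mul_left' (c := c * p ^ (m - j)) hvw
      exact Nat.ModEq.of_dvd ⟨c, by rw [← e3]; ring⟩ h8
    have hstep2 : c * p ^ (m - j) * w ≡ n [MOD 2 * p ^ m] := by
      have h9 := Nat.ModEq.mul_left' (c := p ^ (m - j)) hcw
      have e4 : p ^ (m - j) * (2 * p ^ j) = 2 * p ^ m := by
        rw [mul_left_comm, e3]
      have h10 : c * p ^ (m - j) * w ≡ p ^ (m - j) * u0 [MOD 2 * p ^ m] := by
        rw [← e4, show c * p ^ (m - j) * w = p ^ (m - j) * (c * w) by ring]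
        exact h9
      have h11 : p ^ (m - j) * u0 = n := by rw [hmj]; exact hord
      rwa [h11] at h10
    have hfinal : c * p ^ (m - j) * v ≡ n [MOD 2 * p ^ m] := hstep1.trans hstep2
    have hxeq : x = ((c * p ^ (m - j) * v : ℕ) : ZMod (2 * p ^ m)) := by
      rw [← hnx, ZMod.natCast_eq_natCast_iff]
      exact hfinal.symm
    refine ⟨⟨j, i, c⟩, ⟨h1j, hjm, hi, by rcases hc2 with rfl | rfl <;> simp, ?_⟩, ?_⟩
    · rw [hmem]
      exact ⟨t, ht, hxeq⟩
    · rintro ⟨j', i', c'⟩ ⟨h1j', hj'm, hi', hc', hx'⟩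
      dsimp only at h1j' hj'm hi' hc' hx'
      have hc'2 : c' = 1 ∨ c' = 2 := by simpa using hc'
      rw [hmem] at hx'
      obtain ⟨t', ht', hxeq'⟩ := hx'
      set v' := ((g : ZMod (2 * p ^ j')) ^ (i' + t' * (p ^ (j' - 1) * f))).val with hv'_def
      obtain ⟨hcop', hlt'⟩ := hval j' h1j' hj'm (i' + t' * (p ^ (j' - 1) * f))
      obtain ⟨hcop, hlt⟩ := hval j h1j hjm (i + t * d)
      have hmodeq : c' * p ^ (m - j') * v' ≡ c * p ^ (m - j) * v [MOD 2 * p ^ m] := by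
        rw [← ZMod.natCast_eq_natCast_iff, ← hxeq', ← hxeq]
      obtain ⟨hjj, hcc, hvv⟩ := aux_unique hp hodd h1j' hj'm h1j hjm hc'2 hc2 hcop' hcop
        hlt' hlt hmodeq
      subst hjj
      subst hcc
      have hgeq : (g : ZMod (2 * p ^ j)) ^ (i' + t' * d) = (g : ZMod (2 * p ^ j)) ^ (i + t * d) :=
        ZMod.val_injective _ hvv
      rw [aux_pow_iff hgu, (key j h1j hjm).1] at hgeq
      have hlt1 : i' + t' * d < e * d := by
        have h11 : i' + t' * d < (t' + 1) * d := by rw [Nat.succ_mul]; omega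
        have h12 : (t' + 1) * d ≤ e * d := Nat.mul_le_mul_right d ht'
        omega
      have hlt2 : i + t * d < e * d := by
        have h11 : i + t * d < (t + 1) * d := by rw [Nat.succ_mul]; omega
        have h12 : (t + 1) * d ≤ e * d := Nat.mul_le_mul_right d ht
        omega
      have heqnat : i' + t' * d = i + t * d := by
        have h13 : (i' + t' * d) % (e * d) = (i + t * d) % (e * d) := hgeq
        rwa [Nat.mod_eq_of_lt hlt1, Nat.mod_eq_of_lt hlt2] at h13
      have hii : i' = i := by
        have h14 : (i' + t' * d) % d = (i + t * d) % d := by rw [heqnat]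
        rwa [Nat.add_mul_mod_self_right, Nat.add_mul_mod_self_right,
          Nat.mod_eq_of_lt hi', Nat.mod_eq_of_lt hi] at h14
      rw [hii]
end
end

section
/- Let p = ef+1 be an odd prime with f even, n ≥ 1, and 0 ≤ b < p^{n-1} f. Then the sets C_0^{(2p^n)} and C_1^{(2p^n)} defined from the generalized cyclotomic classes (C_1 being the union of {0} and the sets p^{n-j}(D_{(i+b) mod d_j}^{(2p^j)} ∪ 2D_{(i+b) mod d_j}^{(2p^j)}) for 1 ≤ j ≤ n, 0 ≤ i < d_j/2, and C_0 its complement as defined analogously with d_j/2 ≤ i < d_j together with {p^n}) satisfy |C_0^{(2p^n)}| = |C_1^{(2p^n)}| = p^n. -/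
/-! Every residue modulo `2p^n` other than `0` and `p^n` is, for exactly one level `1 ≤ j ≤ n`,
of the form `p^{n-j} x` or `2 p^{n-j} x` with `x` a unit modulo `2p^j`: the level is the
`p`-adic valuation `n - j` of its representative, and the two forms differ in parity. A
primitive root modulo `2p^n` stays one modulo `2p^j`, so the classes `D_i^{(2p^j)}` are the
`d_j` disjoint cosets of `⟨g^{d_j}⟩`, of `e` elements each. At every level `C_0` and `C_1` both
take `d_j / 2` classes, each in its two forms, hence
`1 + ∑_j 2 (d_j / 2) e = 1 + ∑_j φ(p^j) = p^n` elements. -/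

open Polynomial Finset

noncomputable section

section CyclotomicClass

variable {M g d e : ℕ}

theorem isUnit_of_mem_dset (hord : orderOf (g : ZMod M) = e * d) (he : 0 < e) (hd : 0 < d)
    {k : ℕ} {x : ZMod M} (hx : x ∈ Dset M g d e k) : IsUnit x := by
  obtain ⟨t, -, rfl⟩ := mem_image.mp hx
  exact ((orderOf_pos_iff.mp (hord ▸ Nat.mul_pos he hd)).isUnit).pow _

theorem card_dset (hord : orderOf (g : ZMod M) = e * d) (he : 0 < e) (hd : 0 < d) (k : ℕ) :
    (Dset M g d e k).card = e := by
  have hfin : IsOfFinOrder (g : ZMod M) := orderOf_pos_iff.mp (hord ▸ Nat.mul_pos he hd)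
  rw [Dset, card_image_of_injOn, card_range]
  intro t ht s hs hts
  have h : k + t * d ≡ k + s * d [MOD e * d] := hord ▸ hfin.pow_inj_mod.mp hts
  have h' : t ≡ s [MOD e] := Nat.ModEq.mul_right_cancel' hd.ne' (Nat.ModEq.add_left_cancel' k h)
  exact h'.eq_of_lt_of_lt (mem_range.mp ht) (mem_range.mp hs)

theorem disjoint_dset (hord : orderOf (g : ZMod M) = e * d) (he : 0 < e) (hd : 0 < d)
    {k k' : ℕ} (hk : k < d) (hk' : k' < d) (hne : k ≠ k') :
    Disjoint (Dset M g d e k) (Dset M g d e k') := by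
  have hfin : IsOfFinOrder (g : ZMod M) := orderOf_pos_iff.mp (hord ▸ Nat.mul_pos he hd)
  rw [Finset.disjoint_left]
  rintro _ hx hx'
  obtain ⟨t, -, rfl⟩ := mem_image.mp hx
  obtain ⟨s, -, hst⟩ := mem_image.mp hx'
  have h : k' + s * d ≡ k + t * d [MOD d] :=
    (hord ▸ hfin.pow_inj_mod.mp hst : _ ≡ _ [MOD e * d]).of_mul_left e
  have h' : k' ≡ k [MOD d] := by simpa [Nat.ModEq, Nat.add_mul_mod_self_right] using h
  exact hne (h'.eq_of_lt_of_lt hk' hk).symm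

theorem card_biUnion_dset (hord : orderOf (g : ZMod M) = e * d) (he : 0 < e) (hd : 0 < d)
    (b : ℕ) {T : Finset ℕ} (hT : T ⊆ range d) :
    (T.biUnion fun i => Dset M g d e ((i + b) % d)).card = T.card * e := by
  rw [card_biUnion, sum_const_nat fun i _ => card_dset hord he hd _]
  intro i hi i' hi' hne
  refine disjoint_dset hord he hd (Nat.mod_lt _ hd) (Nat.mod_lt _ hd) fun h => hne ?_
  exact (Nat.ModEq.add_right_cancel' b h).eq_of_lt_of_lt (mem_range.mp (hT hi))
    (mem_range.mp (hT hi'))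

end CyclotomicClass

theorem orderOf_natCast_eq_totient_of_dvd {M N g : ℕ} [NeZero N] (hMN : M ∣ N)
    (hg : orderOf (g : ZMod N) = N.totient) : orderOf (g : ZMod M) = M.totient := by
  have : NeZero M := ⟨fun h => NeZero.ne N (Nat.eq_zero_of_zero_dvd (h ▸ hMN))⟩
  have hu : IsUnit (g : ZMod N) :=
    (orderOf_pos_iff.mp (hg ▸ Nat.totient_pos.mpr (NeZero.pos N))).isUnit
  have hgen : Subgroup.zpowers hu.unit = ⊤ := by
    rw [← Subgroup.card_eq_iff_eq_top, Nat.card_zpowers, ← orderOf_units, hu.unit_spec, hg,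
      Nat.card_eq_fintype_card, ZMod.card_units_eq_totient]
  have himage : Subgroup.zpowers (ZMod.unitsMap hMN hu.unit) = ⊤ := by
    rw [← MonoidHom.map_zpowers, hgen,
      Subgroup.map_top_of_surjective _ (ZMod.unitsMap_surjective hMN)]
  have hcast : ((ZMod.unitsMap hMN hu.unit : (ZMod M)ˣ) : ZMod M) = g := by
    rw [ZMod.unitsMap_val, hu.unit_spec, ZMod.cast_natCast hMN]
  rw [← hcast, orderOf_units, ← Nat.card_zpowers, himage, Subgroup.card_top,
    Nat.card_eq_fintype_card, ZMod.card_units_eq_totient]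

theorem sum_Icc_totient_prime_pow_add_one {p : ℕ} (hp : p.Prime) (n : ℕ) :
    ∑ j ∈ Icc 1 n, (p ^ j).totient + 1 = p ^ n :=
  calc ∑ j ∈ Icc 1 n, (p ^ j).totient + 1 = ∑ j ∈ range (n + 1), (p ^ j).totient := by
        rw [sum_range_succ', ← Ico_add_one_right_eq_Icc, sum_Ico_eq_sum_range]
        simp [add_comm]
    _ = ∑ m ∈ (p ^ n).divisors, m.totient := by rw [Nat.divisors_prime_pow hp, sum_map]; rfl
    _ = p ^ n := Nat.sum_totient _

theorem not_dvd_val_of_isUnit {p m : ℕ} (hp : p.Prime) (hpm : p ∣ m) {x : ZMod m}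
    (hx : IsUnit x) : ¬ p ∣ x.val := by
  have hcop := ZMod.val_coe_unit_coprime hx.unit
  rw [hx.unit_spec] at hcop
  exact hp.coprime_iff_not_dvd.mp (hcop.coprime_dvd_right hpm).symm

theorem odd_val_of_isUnit {m : ℕ} {x : ZMod (2 * m)} (hx : IsUnit x) : Odd x.val :=
  Nat.odd_iff.mpr (Nat.two_dvd_ne_zero.mp
    (not_dvd_val_of_isUnit Nat.prime_two (dvd_mul_right 2 m) hx))

theorem eq_of_isUnit_of_val_mod_eq {m : ℕ} (hm : Odd m) {x x' : ZMod (2 * m)}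
    (hx : IsUnit x) (hx' : IsUnit x') (h : x.val % m = x'.val % m) : x = x' := by
  have : NeZero (2 * m) := ⟨by have := hm.pos; positivity⟩
  have h2 : x.val ≡ x'.val [MOD 2] :=
    (Nat.odd_iff.mp (odd_val_of_isUnit hx)).trans (Nat.odd_iff.mp (odd_val_of_isUnit hx')).symm
  have hcop : Nat.Coprime 2 m := Nat.coprime_two_left.mpr hm
  have h2m : x.val ≡ x'.val [MOD 2 * m] := (Nat.modEq_and_modEq_iff_modEq_mul hcop).mp ⟨h2, h⟩
  exact ZMod.val_injective _ (h2m.eq_of_lt_of_lt (ZMod.val_lt x) (ZMod.val_lt x'))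

theorem val_natCast_mul_eq {N c m : ℕ} (hN : N = c * m) (v : ℕ) :
    ((c * v : ℕ) : ZMod N).val = c * (v % m) := by
  rw [ZMod.val_natCast, hN, Nat.mul_mod_mul_left]

theorem pow_mul_ne_zero_and_padicValNat_pow_mul {p u : ℕ} (hp : 1 < p) (k : ℕ)
    (hu : ¬ p ∣ u) : p ^ k * u ≠ 0 ∧ padicValNat p (p ^ k * u) = k := by
  have hu0 : u ≠ 0 := by rintro rfl; exact hu (dvd_zero p)
  exact ⟨mul_ne_zero (pow_ne_zero _ (by omega)) hu0, by
    rw [padicValNat_base_pow_mul hp hu0, padicValNat.eq_zero_of_not_dvd hu, zero_add]⟩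

/-- `p^{n-j} (S ∪ 2S)`, read in `ZMod (2 * p ^ n)`. -/
def levelImage (p n j : ℕ) (S : Finset (ZMod (2 * p ^ j))) : Finset (ZMod (2 * p ^ n)) :=
  S.image (fun x => ((p ^ (n - j) * x.val : ℕ) : ZMod (2 * p ^ n))) ∪
    S.image (fun x => ((2 * p ^ (n - j) * x.val : ℕ) : ZMod (2 * p ^ n)))

section LevelImage

variable {p n j : ℕ}

theorem val_natCast_pow_sub_mul_val (hp : 0 < p) (hjn : j ≤ n) (x : ZMod (2 * p ^ j)) :
    ((p ^ (n - j) * x.val : ℕ) : ZMod (2 * p ^ n)).val = p ^ (n - j) * x.val := by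
  have : NeZero (2 * p ^ j) := ⟨by positivity⟩
  rw [val_natCast_mul_eq (m := 2 * p ^ j) (by rw [mul_left_comm, pow_sub_mul_pow p hjn]),
    Nat.mod_eq_of_lt (ZMod.val_lt x)]

theorem val_natCast_two_mul_pow_sub_mul (hjn : j ≤ n) (v : ℕ) :
    ((2 * p ^ (n - j) * v : ℕ) : ZMod (2 * p ^ n)).val = 2 * p ^ (n - j) * (v % p ^ j) :=
  val_natCast_mul_eq (by rw [mul_assoc, pow_sub_mul_pow p hjn]) v

theorem card_levelImage (hp : p.Prime) (hodd : Odd p) (hjn : j ≤ n)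
    {S : Finset (ZMod (2 * p ^ j))} (hS : ∀ x ∈ S, IsUnit x) :
    (levelImage p n j S).card = 2 * S.card := by
  have hpj : 0 < p ^ (n - j) := pow_pos hp.pos _
  have : NeZero (2 * p ^ j) := ⟨by have := hp.pos; positivity⟩
  rw [levelImage, card_union_of_disjoint, card_image_of_injOn, card_image_of_injOn, ← two_mul]
  · intro x hx x' hx' h
    have hv := congrArg ZMod.val h
    rw [val_natCast_two_mul_pow_sub_mul hjn, val_natCast_two_mul_pow_sub_mul hjn] at hv
    exact eq_of_isUnit_of_val_mod_eq hodd.pow (hS x hx) (hS x' hx')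
      (Nat.eq_of_mul_eq_mul_left (by positivity) hv)
  · intro x _ x' _ h
    have hv := congrArg ZMod.val h
    rw [val_natCast_pow_sub_mul_val hp.pos hjn, val_natCast_pow_sub_mul_val hp.pos hjn] at hv
    exact ZMod.val_injective _ (Nat.eq_of_mul_eq_mul_left hpj hv)
  · rw [Finset.disjoint_left]
    rintro _ hy hy'
    obtain ⟨x, hx, rfl⟩ := mem_image.mp hy
    obtain ⟨x', -, hxx'⟩ := mem_image.mp hy'
    have hv := congrArg ZMod.val hxx'
    rw [val_natCast_pow_sub_mul_val hp.pos hjn, val_natCast_two_mul_pow_sub_mul hjn] at hv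
    have : Odd (2 * (p ^ (n - j) * (x'.val % p ^ j))) := by
      rw [← mul_assoc, hv]
      exact hodd.pow.mul (odd_val_of_isUnit (hS x hx))
    exact Nat.not_odd_iff_even.mpr (even_two_mul _) this

theorem padicValNat_val_of_mem_levelImage (hp : p.Prime) (hodd : Odd p) (hj : 1 ≤ j)
    (hjn : j ≤ n) {S : Finset (ZMod (2 * p ^ j))} (hS : ∀ x ∈ S, IsUnit x)
    {y : ZMod (2 * p ^ n)} (hy : y ∈ levelImage p n j S) :
    y.val ≠ 0 ∧ padicValNat p y.val = n - j := by
  have hpadic := fun u => pow_mul_ne_zero_and_padicValNat_pow_mul hp.one_lt (n - j) (u := u)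
  have hpj : p ∣ p ^ j := dvd_pow_self p (by omega)
  rcases mem_union.mp hy with hy | hy <;> obtain ⟨x, hx, rfl⟩ := mem_image.mp hy
  · rw [val_natCast_pow_sub_mul_val hp.pos hjn]
    exact hpadic _ (not_dvd_val_of_isUnit hp (dvd_mul_of_dvd_right hpj 2) (hS x hx))
  · rw [val_natCast_two_mul_pow_sub_mul hjn, mul_comm 2, mul_assoc]
    refine hpadic _ fun h => ?_
    rcases (Nat.Prime.dvd_mul hp).mp h with h2 | hmod
    · exact (by decide : ¬ Odd 2) ((Nat.prime_dvd_prime_iff_eq hp Nat.prime_two).mp h2 ▸ hodd)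
    · exact not_dvd_val_of_isUnit hp (dvd_mul_of_dvd_right hpj 2) (hS x hx)
        ((Nat.dvd_mod_iff hpj).mp hmod)

end LevelImage

theorem totient_prime_pow_eq_mul {p e f j : ℕ} (hp : p.Prime) (hpef : p = e * f + 1)
    (hj : 1 ≤ j) : (p ^ j).totient = e * (p ^ (j - 1) * f) := by
  rw [Nat.totient_prime_pow hp hj, hpef, Nat.add_sub_cancel]
  ring

def levelUnion (p g e f b n : ℕ) (T : ℕ → Finset ℕ) : Finset (ZMod (2 * p ^ n)) :=
  (Icc 1 n).biUnion fun j => levelImage p n j <| (T j).biUnion fun i =>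
    Dset (2 * p ^ j) g (p ^ (j - 1) * f) e ((i + b) % (p ^ (j - 1) * f))

theorem cone_eq_insert_levelUnion (p g e f b n : ℕ) :
    Cone p g e f b n =
      insert 0 (levelUnion p g e f b n fun j => range (p ^ (j - 1) * f / 2)) := by
  simp only [Cone, levelUnion, levelImage, biUnion_image, biUnion_union]

theorem czero_eq_insert_levelUnion (p g e f b n : ℕ) :
    Czero p g e f b n = insert ((p ^ n : ℕ) : ZMod (2 * p ^ n))
      (levelUnion p g e f b n fun j => Ico (p ^ (j - 1) * f / 2) (p ^ (j - 1) * f)) := by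
  simp only [Czero, levelUnion, levelImage, biUnion_image, biUnion_union]

section LevelUnion

variable {p e f n g : ℕ}

theorem orderOf_natCast_two_mul_pow (hp : p.Prime) (hodd : Odd p) (hpef : p = e * f + 1)
    (hg : orderOf (g : ZMod (2 * p ^ n)) = (2 * p ^ n).totient) {j : ℕ} (hj : 1 ≤ j)
    (hjn : j ≤ n) : orderOf (g : ZMod (2 * p ^ j)) = e * (p ^ (j - 1) * f) := by
  have : NeZero (2 * p ^ n) := ⟨by have := hp.pos; positivity⟩
  rw [orderOf_natCast_eq_totient_of_dvd (mul_dvd_mul_left 2 (pow_dvd_pow p hjn)) hg,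
    Nat.totient_two_mul_of_odd hodd.pow, totient_prime_pow_eq_mul hp hpef hj]

theorem isUnit_of_mem_biUnion_dset (hp : p.Prime) (hodd : Odd p) (hpef : p = e * f + 1)
    (he : 0 < e) (hf : 0 < f) (hg : orderOf (g : ZMod (2 * p ^ n)) = (2 * p ^ n).totient)
    {j : ℕ} (hj : j ∈ Icc 1 n) (b : ℕ) (T : Finset ℕ) {x : ZMod (2 * p ^ j)}
    (hx : x ∈ T.biUnion fun i =>
      Dset (2 * p ^ j) g (p ^ (j - 1) * f) e ((i + b) % (p ^ (j - 1) * f))) :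
    IsUnit x := by
  obtain ⟨i, -, hx⟩ := mem_biUnion.mp hx
  have := hp.pos
  exact isUnit_of_mem_dset (orderOf_natCast_two_mul_pow hp hodd hpef hg (mem_Icc.mp hj).1
    (mem_Icc.mp hj).2) he (by positivity) hx

theorem val_ne_zero_and_padicValNat_lt_of_mem_levelUnion (hp : p.Prime) (hodd : Odd p)
    (hpef : p = e * f + 1) (he : 0 < e) (hf : 0 < f)
    (hg : orderOf (g : ZMod (2 * p ^ n)) = (2 * p ^ n).totient) (b : ℕ) (T : ℕ → Finset ℕ)
    {y : ZMod (2 * p ^ n)} (hy : y ∈ levelUnion p g e f b n T) :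
    y.val ≠ 0 ∧ padicValNat p y.val < n := by
  obtain ⟨j, hj, hy⟩ := mem_biUnion.mp hy
  obtain ⟨hj1, hjn⟩ := mem_Icc.mp hj
  obtain ⟨hy0, hyv⟩ := padicValNat_val_of_mem_levelImage hp hodd hj1 hjn
    (fun x => isUnit_of_mem_biUnion_dset hp hodd hpef he hf hg hj b (T j)) hy
  exact ⟨hy0, by omega⟩

theorem card_levelUnion_add_one (hp : p.Prime) (hodd : Odd p) (hpef : p = e * f + 1)
    (he : 0 < e) (hf : 0 < f) (hg : orderOf (g : ZMod (2 * p ^ n)) = (2 * p ^ n).totient)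
    (b : ℕ) {T : ℕ → Finset ℕ} (hT : ∀ j, T j ⊆ range (p ^ (j - 1) * f))
    (hTcard : ∀ j, 2 * (T j).card = p ^ (j - 1) * f) :
    (levelUnion p g e f b n T).card + 1 = p ^ n := by
  have hS (j : ℕ) (hj : j ∈ Icc 1 n) :=
    fun x => isUnit_of_mem_biUnion_dset hp hodd hpef he hf hg hj b (T j) (x := x)
  have := hp.pos
  rw [levelUnion, card_biUnion]
  · refine Eq.trans ?_ (sum_Icc_totient_prime_pow_add_one hp n)
    congr 1
    refine sum_congr rfl fun j hj => ?_
    obtain ⟨hj1, hjn⟩ := mem_Icc.mp hj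
    rw [card_levelImage hp hodd hjn (hS j hj), card_biUnion_dset
      (orderOf_natCast_two_mul_pow hp hodd hpef hg hj1 hjn) he (by positivity) b (hT j),
      totient_prime_pow_eq_mul hp hpef hj1, ← hTcard j]
    ring
  · intro j hj j' hj' hne
    obtain ⟨hj1, hjn⟩ := mem_Icc.mp hj
    obtain ⟨hj1', hjn'⟩ := mem_Icc.mp hj'
    refine Finset.disjoint_left.mpr fun y hy hy' => hne ?_
    have h := (padicValNat_val_of_mem_levelImage hp hodd hj1 hjn (hS j hj) hy).2
    have h' := (padicValNat_val_of_mem_levelImage hp hodd hj1' hjn' (hS j' hj') hy').2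
    omega

end LevelUnion

theorem stmt6_general (p e f n g b : ℕ) (hp : p.Prime) (hodd : Odd p) (hpef : p = e * f + 1)
    (he : 0 < e) (hf : 0 < f) (hfe : Even f)
    (hg : orderOf (g : ZMod (2 * p ^ n)) = Nat.totient (2 * p ^ n)) :
    (Czero p g e f b n).card = p ^ n ∧ (Cone p g e f b n).card = p ^ n := by
  have : Fact p.Prime := ⟨hp⟩
  have hhalf (j : ℕ) : 2 * (p ^ (j - 1) * f / 2) = p ^ (j - 1) * f :=
    Nat.two_mul_div_two_of_even (hfe.mul_left _)
  have hval := val_ne_zero_and_padicValNat_lt_of_mem_levelUnion hp hodd hpef he hf hg b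
  constructor
  · rw [czero_eq_insert_levelUnion, card_insert_of_notMem, card_levelUnion_add_one hp hodd hpef
      he hf hg b (fun j x hx => mem_range.mpr (mem_Ico.mp hx).2)
      (fun j => by rw [Nat.card_Ico]; have := hhalf j; omega)]
    intro hmem
    have hlt := (hval _ hmem).2
    rw [ZMod.val_natCast_of_lt (by have := pow_pos hp.pos n; omega), padicValNat.prime_pow] at hlt
    exact lt_irrefl n hlt
  · rw [cone_eq_insert_levelUnion, card_insert_of_notMem, card_levelUnion_add_one hp hodd hpef
      he hf hg b (fun j => range_subset_range.mpr (Nat.div_le_self _ _))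
      (fun j => by rw [card_range, hhalf])]
    exact fun hmem => (hval _ hmem).1 ZMod.val_zero

/-- The sets `C_0^{(2p^n)}` and `C_1^{(2p^n)}` both have cardinality `p^n`. -/
theorem stmt6 (p e f n g b : ℕ) (hp : p.Prime) (hodd : Odd p) (hpef : p = e * f + 1)
    (he : 0 < e) (hf : 0 < f) (hfe : Even f) (hn : 1 ≤ n) (hgodd : Odd g)
    (hg : orderOf (g : ZMod (2 * p ^ n)) = Nat.totient (2 * p ^ n))
    (hb : b < p ^ (n - 1) * f) :
    (Czero p g e f b n).card = p ^ n ∧ (Cone p g e f b n).card = p ^ n :=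
  stmt6_general p e f n g b hp hodd hpef he hf hfe hg
end
end

section
/- Let α_m be a primitive p^m-th root of unity in an algebraic closure of F_2, and let T_i^{(p^m)}(x) be as defined from the generalized cyclotomic classes. Then for any a in D_k^{(p^m)}, T_i^{(p^m)}(α_m^a) + T_{i + d_m/2}^{(p^m)}(α_m^a) = 1. -/
open Polynomial Finset

noncomputable section

lemma geom_zero {F : Type*} [Field F] {β : F} {n : ℕ} (h1 : β ≠ 1) (hn : β ^ n = 1) :
    ∑ t ∈ Finset.range n, β ^ t = 0 := by
  rw [geom_sum_eq h1 n, hn, sub_self, zero_div]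

lemma cycle_shift {F : Type*} [Field F] (d k : ℕ) (hd : 0 < d) (G : ℕ → F) :
    ∑ i ∈ Finset.range d, G ((i + k) % d) = ∑ i ∈ Finset.range d, G i := by
  have hkey : ∀ a : ℕ, a < d → (a + k + k * (d - 1)) % d = a := by
    intro a ha
    have h1 : a + k + k * (d - 1) = a + k * d := by
      have : d - 1 + 1 = d := Nat.succ_pred_eq_of_pos hd
      nlinarith [this]
    rw [h1, Nat.add_mul_mod_self_right, Nat.mod_eq_of_lt ha]
  refine Finset.sum_nbij' (fun i => (i + k) % d) (fun i => (i + k * (d - 1)) % d)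
    ?_ ?_ ?_ ?_ ?_
  · intro a _; exact Finset.mem_range.2 (Nat.mod_lt _ hd)
  · intro a _; exact Finset.mem_range.2 (Nat.mod_lt _ hd)
  · intro a ha
    show ((a + k) % d + k * (d - 1)) % d = a
    rw [Nat.mod_add_mod]
    exact hkey a (Finset.mem_range.1 ha)
  · intro a ha
    show ((a + k * (d - 1)) % d + k) % d = a
    rw [Nat.mod_add_mod]
    have h2 : a + k * (d - 1) + k = a + k + k * (d - 1) := by ring
    rw [h2]
    exact hkey a (Finset.mem_range.1 ha)
  · intro a _; rfl

lemma block_sum {F : Type*} [Field F] (d e : ℕ) (hd : 0 < d) (G : ℕ → F) :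
    ∑ i ∈ Finset.range d, ∑ t ∈ Finset.range e, G (i + t * d)
      = ∑ s ∈ Finset.range (d * e), G s := by
  rw [← Finset.sum_product']
  refine Finset.sum_nbij' (fun x => x.1 + x.2 * d) (fun s => (s % d, s / d))
    ?_ ?_ ?_ ?_ ?_
  · rintro ⟨i, t⟩ h
    simp only [Finset.mem_product, Finset.mem_range] at h
    refine Finset.mem_range.2 ?_
    calc i + t * d < d + t * d := by omega
      _ = (t + 1) * d := by ring
      _ ≤ e * d := Nat.mul_le_mul_right d h.2
      _ = d * e := Nat.mul_comm _ _
  · intro s hs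
    simp only [Finset.mem_range] at hs
    simp only [Finset.mem_product, Finset.mem_range]
    exact ⟨Nat.mod_lt _ hd, Nat.div_lt_of_lt_mul (by omega)⟩
  · rintro ⟨i, t⟩ h
    simp only [Finset.mem_product, Finset.mem_range] at h
    simp [Nat.add_mul_mod_self_right, Nat.mod_eq_of_lt h.1,
      Nat.add_mul_div_right _ _ hd, Nat.div_eq_of_lt h.1]
  · intro s _
    show s % d + s / d * d = s
    rw [Nat.mul_comm]
    exact Nat.mod_add_div _ _
  · intro a _; rfl

lemma orderOf_zmod_pow_le (p : ℕ) (hp : p.Prime) (g : ℕ) {j m : ℕ} (hjm : j ≤ m)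
    (hg : orderOf (g : ZMod (p ^ m)) = Nat.totient (p ^ m)) :
    orderOf (g : ZMod (p ^ j)) = Nat.totient (p ^ j) := by
  haveI : NeZero (p ^ m) := ⟨pow_ne_zero _ hp.ne_zero⟩
  haveI : NeZero (p ^ j) := ⟨pow_ne_zero _ hp.ne_zero⟩
  have htm : Nat.totient (p ^ m) ≠ 0 :=
    (Nat.totient_pos.2 (Nat.pos_of_ne_zero (NeZero.ne _))).ne'
  have hu : IsUnit ((g : ZMod (p ^ m))) :=
    IsUnit.of_pow_eq_one (n := Nat.totient (p ^ m)) (by rw [← hg]; exact pow_orderOf_eq_one _) htm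
  have huval : (hu.unit : ZMod (p ^ m)) = (g : ZMod (p ^ m)) := hu.unit_spec
  have hordu : orderOf hu.unit = Fintype.card (ZMod (p ^ m))ˣ := by
    rw [← orderOf_units, huval, hg, ZMod.card_units_eq_totient]
  have htop : ∀ x : (ZMod (p ^ m))ˣ, x ∈ Subgroup.zpowers hu.unit := by
    have : Subgroup.zpowers hu.unit = ⊤ := by
      apply Subgroup.eq_top_of_card_eq
      rw [Nat.card_zpowers, hordu, Nat.card_eq_fintype_card]
    intro x; rw [this]; trivial
  have hdvd : p ^ j ∣ p ^ m := pow_dvd_pow p hjm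
  have hsurj := ZMod.unitsMap_surjective (m := p ^ m) hdvd
  set v := ZMod.unitsMap hdvd hu.unit with hv_def
  have hv : ∀ w : (ZMod (p ^ j))ˣ, w ∈ Subgroup.zpowers v := by
    intro w
    obtain ⟨w', rfl⟩ := hsurj w
    obtain ⟨z, hz⟩ := htop w'
    exact ⟨z, by rw [← hz, map_zpow]⟩
  have hordv : orderOf v = Fintype.card (ZMod (p ^ j))ˣ := by
    rw [orderOf_eq_card_of_forall_mem_zpowers hv, Nat.card_eq_fintype_card]
  have hvval : (v : ZMod (p ^ j)) = (g : ZMod (p ^ j)) := by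
    rw [hv_def, ZMod.unitsMap_def, Units.coe_map, MonoidHom.coe_coe, huval, map_natCast]
  rw [← hvval, orderOf_units, hordv, ZMod.card_units_eq_totient]

lemma key (p : ℕ) (hp : p.Prime) (j : ℕ) (hj : 1 ≤ j) (g : ℕ)
    (hg : orderOf (g : ZMod (p ^ j)) = Nat.totient (p ^ j))
    {F : Type*} [Field F] (β : F) (hβ : IsPrimitiveRoot β (p ^ j))
    (e d : ℕ) (hd : 0 < d) (hde : d * e = Nat.totient (p ^ j)) :
    ∑ i ∈ Finset.range d, Esum (p ^ j) g d e i β = if j = 1 then -1 else 0 := by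
  haveI : NeZero (p ^ j) := ⟨pow_ne_zero _ hp.ne_zero⟩
  have hM1 : 1 < p ^ j := Nat.one_lt_pow (by omega) hp.one_lt
  have hde0 : 0 < d * e := by
    rw [hde]; exact Nat.totient_pos.2 (by omega)
  have hgu : IsUnit (g : ZMod (p ^ j)) :=
    IsUnit.of_pow_eq_one (n := Nat.totient (p ^ j))
      (by rw [← hg]; exact pow_orderOf_eq_one _) (by omega)
  -- injectivity of powers of g below d*e
  have hinj : ∀ s ∈ Finset.range (d * e), ∀ t ∈ Finset.range (d * e),
      (g : ZMod (p ^ j)) ^ s = (g : ZMod (p ^ j)) ^ t → s = t := by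
    intro s hs t ht h
    exact pow_injOn_Iio_orderOf
      (by rw [Set.mem_Iio, hg, ← hde]; exact Finset.mem_range.1 hs)
      (by rw [Set.mem_Iio, hg, ← hde]; exact Finset.mem_range.1 ht) h
  -- Step A: expand Esum
  have hA : ∑ i ∈ Finset.range d, Esum (p ^ j) g d e i β
      = ∑ i ∈ Finset.range d, ∑ t ∈ Finset.range e,
          β ^ ((g : ZMod (p ^ j)) ^ (i + t * d)).val := by
    refine Finset.sum_congr rfl ?_
    intro i hi
    have hi' := Finset.mem_range.1 hi
    rw [Esum, Dset, Finset.sum_image]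
    intro t1 h1 t2 h2 h
    have hb : ∀ t ∈ Finset.range e, i + t * d ∈ Finset.range (d * e) := by
      intro t ht
      refine Finset.mem_range.2 ?_
      calc i + t * d < d + t * d := by omega
        _ = (t + 1) * d := by ring
        _ ≤ e * d := Nat.mul_le_mul_right d (Finset.mem_range.1 ht)
        _ = d * e := Nat.mul_comm _ _
    have h' := hinj _ (hb t1 h1) _ (hb t2 h2) h
    have h'' : t1 * d = t2 * d := by omega
    exact Nat.eq_of_mul_eq_mul_right hd h''
  rw [hA, block_sum d e hd (fun s => β ^ ((g : ZMod (p ^ j)) ^ s).val)]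
  -- Step C: the image of powers is the set of units
  have himg : (Finset.range (d * e)).image (fun s => (g : ZMod (p ^ j)) ^ s)
      = Finset.univ.filter (fun x : ZMod (p ^ j) => IsUnit x) := by
    apply Finset.Subset.antisymm
    · intro x hx
      obtain ⟨s, _, rfl⟩ := Finset.mem_image.1 hx
      exact Finset.mem_filter.2 ⟨Finset.mem_univ _, hgu.pow _⟩
    · intro x hx
      have hxu : IsUnit x := (Finset.mem_filter.1 hx).2
      have huval : (hgu.unit : ZMod (p ^ j)) = (g : ZMod (p ^ j)) := hgu.unit_spec
      have hordu : orderOf hgu.unit = d * e := by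
        rw [← orderOf_units, huval, hg, hde]
      have htop : Subgroup.zpowers hgu.unit = ⊤ := by
        apply Subgroup.eq_top_of_card_eq
        rw [Nat.card_zpowers, hordu, Nat.card_eq_fintype_card,
          ZMod.card_units_eq_totient, hde]
      have hmem : hxu.unit ∈ Subgroup.zpowers hgu.unit := by rw [htop]; trivial
      have hmem' : hxu.unit ∈ Submonoid.powers hgu.unit :=
        mem_powers_iff_mem_zpowers.2 hmem
      obtain ⟨n, hn0⟩ := hmem'
      have hn : hgu.unit ^ n = hxu.unit := hn0
      refine Finset.mem_image.2 ⟨n % (d * e), Finset.mem_range.2 (Nat.mod_lt _ hde0), ?_⟩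
      have : (g : ZMod (p ^ j)) ^ (n % (d * e)) = (g : ZMod (p ^ j)) ^ n := by
        rw [← huval, ← Units.val_pow_eq_pow_val, ← Units.val_pow_eq_pow_val, ← hordu,
          pow_mod_orderOf]
      rw [this, ← huval, ← Units.val_pow_eq_pow_val, hn, hxu.unit_spec]
  have hC : ∑ s ∈ Finset.range (d * e), β ^ ((g : ZMod (p ^ j)) ^ s).val
      = ∑ x ∈ Finset.univ.filter (fun x : ZMod (p ^ j) => IsUnit x), β ^ x.val := by
    rw [← himg, Finset.sum_image hinj]
  rw [hC]
  -- Step E: total sum is 0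
  have hE : ∑ x : ZMod (p ^ j), β ^ x.val = 0 := by
    have : ∑ x : ZMod (p ^ j), β ^ x.val = ∑ t ∈ Finset.range (p ^ j), β ^ t := by
      refine Finset.sum_nbij' (fun x => x.val) (fun t => (t : ZMod (p ^ j)))
        ?_ ?_ ?_ ?_ ?_
      · intro x _; exact Finset.mem_range.2 (ZMod.val_lt x)
      · intro t _; exact Finset.mem_univ _
      · intro x _; exact ZMod.natCast_rightInverse x
      · intro t ht; exact ZMod.val_cast_of_lt (Finset.mem_range.1 ht)
      · intro x _; rfl
    rw [this]
    exact geom_zero (hβ.ne_one hM1) hβ.pow_eq_one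
  -- Step F: nonunit sum
  have hnu : ∀ x : ZMod (p ^ j), ¬IsUnit x ↔ p ∣ x.val := by
    intro x
    have h1 : IsUnit x ↔ Nat.Coprime x.val (p ^ j) := by
      conv_lhs => rw [← ZMod.natCast_rightInverse x]
      exact ZMod.isUnit_iff_coprime _ _
    rw [h1, Nat.coprime_pow_right_iff (by omega), Nat.coprime_comm,
      hp.coprime_iff_not_dvd, not_not]
  have hpj : p ^ j = p * p ^ (j - 1) := by
    conv_lhs => rw [show j = 1 + (j - 1) by omega]
    rw [pow_add, pow_one]
  have hF : ∑ x ∈ Finset.univ.filter (fun x : ZMod (p ^ j) => ¬IsUnit x), β ^ x.val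
      = ∑ t ∈ Finset.range (p ^ (j - 1)), (β ^ p) ^ t := by
    refine Finset.sum_nbij' (fun x => x.val / p) (fun t => ((p * t : ℕ) : ZMod (p ^ j)))
      ?_ ?_ ?_ ?_ ?_
    · intro x hx
      have hdvd := (hnu x).1 (Finset.mem_filter.1 hx).2
      refine Finset.mem_range.2 ?_
      have h2 : x.val < p * p ^ (j - 1) := by rw [← hpj]; exact ZMod.val_lt x
      exact Nat.div_lt_of_lt_mul h2
    · intro t ht
      have hlt : p * t < p ^ j := by
        rw [hpj]
        exact mul_lt_mul_of_pos_left (Finset.mem_range.1 ht) hp.pos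
      refine Finset.mem_filter.2 ⟨Finset.mem_univ _, (hnu _).2 ?_⟩
      rw [ZMod.val_cast_of_lt hlt]
      exact Dvd.intro t rfl
    · intro x hx
      have hdvd := (hnu x).1 (Finset.mem_filter.1 hx).2
      show ((p * (x.val / p) : ℕ) : ZMod (p ^ j)) = x
      rw [Nat.mul_div_cancel' hdvd]
      exact ZMod.natCast_rightInverse x
    · intro t ht
      have hlt : p * t < p ^ j := by
        rw [hpj]
        exact mul_lt_mul_of_pos_left (Finset.mem_range.1 ht) hp.pos
      show (((p * t : ℕ) : ZMod (p ^ j))).val / p = t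
      rw [ZMod.val_cast_of_lt hlt]
      exact Nat.mul_div_cancel_left t hp.pos
    · intro x hx
      have hdvd := (hnu x).1 (Finset.mem_filter.1 hx).2
      show β ^ x.val = (β ^ p) ^ (x.val / p)
      rw [← pow_mul, Nat.mul_div_cancel' hdvd]
  -- assemble
  have hsplit := Finset.sum_filter_add_sum_filter_not Finset.univ
    (fun x : ZMod (p ^ j) => IsUnit x) (fun x => β ^ x.val)
  rw [hE] at hsplit
  have hval : ∑ t ∈ Finset.range (p ^ (j - 1)), (β ^ p) ^ t
      = if j = 1 then 1 else 0 := by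
    by_cases h1 : j = 1
    · subst h1; simp
    · rw [if_neg h1]
      refine geom_zero ?_ ?_
      · exact hβ.pow_ne_one_of_pos_of_lt hp.ne_zero
          (by
            calc p = p ^ 1 := (pow_one p).symm
              _ < p ^ j := Nat.pow_lt_pow_right hp.one_lt (by omega))
      · rw [← pow_mul, ← hpj]; exact hβ.pow_eq_one
  rw [hF, hval] at hsplit
  by_cases h1 : j = 1
  · rw [if_pos h1] at hsplit ⊢
    exact eq_neg_of_add_eq_zero_left hsplit
  · rw [if_neg h1] at hsplit ⊢
    rw [add_zero] at hsplit
    exact hsplit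

lemma Hpair {F : Type*} [Field F] (p e f c m g : ℕ) (hp : p.Prime) (hodd : Odd p)
    (hpef : p = e * f + 1) (hc : 0 < c) (hf : f = 2 * c) {j : ℕ} (hj : 1 ≤ j) (hjm : j ≤ m)
    (hg : orderOf (g : ZMod (p ^ j)) = Nat.totient (p ^ j))
    (β : F) (hβ : IsPrimitiveRoot β (p ^ j)) (i : ℕ) :
    Hsum p g e f j i β + Hsum p g e f j (i + p ^ (m - 1) * f / 2) β
      = if j = 1 then -1 else 0 := by
  have hppos : 0 < p := hp.pos
  have hhalf : p ^ (j - 1) * f / 2 = p ^ (j - 1) * c := by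
    rw [hf, show p ^ (j - 1) * (2 * c) = 2 * (p ^ (j - 1) * c) by ring]
    exact Nat.mul_div_cancel_left _ (by norm_num)
  set d := p ^ (j - 1) * f with hd_def
  set h := p ^ (j - 1) * c with hh_def
  have hhpos : 0 < h := Nat.mul_pos (Nat.pow_pos hppos) hc
  have hd2h : d = h + h := by rw [hd_def, hh_def, hf]; ring
  have hdpos : 0 < d := by omega
  have hDhalf : p ^ (m - 1) * f / 2 = p ^ (m - j) * h := by
    rw [hf, show p ^ (m - 1) * (2 * c) = 2 * (p ^ (m - 1) * c) by ring,
      Nat.mul_div_cancel_left _ (by norm_num : 0 < 2), hh_def, ← Nat.mul_assoc, ← pow_add]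
    congr 2
    omega
  obtain ⟨q, hq⟩ := hodd.pow (n := m - j)
  have hqd : p ^ (m - 1) * f / 2 = q * d + h := by
    rw [hDhalf, hq, hd2h]; ring
  have hmod : ∀ x : ℕ, (x + (i + p ^ (m - 1) * f / 2)) % d = (h + x + i) % d := by
    intro x
    have hx : x + (i + p ^ (m - 1) * f / 2) = (h + x + i) + q * d := by omega
    rw [hx, Nat.add_mul_mod_self_right]
  have htot : d * e = Nat.totient (p ^ j) := by
    rw [Nat.totient_prime_pow hp (by omega)]
    have : p - 1 = e * f := by omega
    rw [this, hd_def]; ring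
  unfold Hsum
  rw [hhalf]
  have h2 : ∑ x ∈ Finset.range h,
      Esum (p ^ j) g d e ((x + (i + p ^ (m - 1) * f / 2)) % d) β
      = ∑ x ∈ Finset.range h, Esum (p ^ j) g d e ((h + x + i) % d) β := by
    refine Finset.sum_congr rfl fun x _ => ?_
    rw [hmod x]
  rw [h2]
  have h3 : ∑ x ∈ Finset.range h, Esum (p ^ j) g d e ((x + i) % d) β
        + ∑ x ∈ Finset.range h, Esum (p ^ j) g d e ((h + x + i) % d) β
      = ∑ x ∈ Finset.range (h + h), Esum (p ^ j) g d e ((x + i) % d) β := by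
    rw [Finset.sum_range_add (fun x => Esum (p ^ j) g d e ((x + i) % d) β) h h]
  rw [h3, ← hd2h, cycle_shift d i hdpos (fun x => Esum (p ^ j) g d e x β)]
  exact key p hp j hj g hg β hβ e d hdpos htot

/-- For any `a ∈ D_k^{(p^m)}`, `T_i^{(p^m)}(α_m^a) + T_{i+d_m/2}^{(p^m)}(α_m^a) = 1`. -/
theorem stmt8 (p e f m g : ℕ) (hp : p.Prime) (hodd : Odd p) (hpef : p = e * f + 1)
    (he : 0 < e) (hf : 0 < f) (hfe : Even f) (hm : 1 ≤ m)
    (hg : orderOf (g : ZMod (p ^ m)) = Nat.totient (p ^ m))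
    (α : AlgebraicClosure (ZMod 2)) (hα : IsPrimitiveRoot α (p ^ m))
    (i k : ℕ) (a : ZMod (p ^ m)) (ha : a ∈ Dset (p ^ m) g (p ^ (m - 1) * f) e k) :
    Tsum p g e f m i (α ^ a.val) +
      Tsum p g e f m (i + p ^ (m - 1) * f / 2) (α ^ a.val) = 1 := by
  obtain ⟨c, hfc⟩ := hfe
  have hf2 : f = 2 * c := by omega
  have hc : 0 < c := by omega
  haveI : NeZero (p ^ m) := ⟨pow_ne_zero _ hp.pos.ne'⟩
  have htm : Nat.totient (p ^ m) ≠ 0 :=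
    (Nat.totient_pos.2 (Nat.pow_pos hp.pos)).ne'
  have hgu : IsUnit (g : ZMod (p ^ m)) :=
    IsUnit.of_pow_eq_one (n := Nat.totient (p ^ m))
      (by rw [← hg]; exact pow_orderOf_eq_one _) htm
  obtain ⟨t, ht, hta⟩ := Finset.mem_image.1 ha
  have hau : IsUnit a := by rw [← hta]; exact hgu.pow _
  have hcop : Nat.Coprime a.val (p ^ m) := by
    have h := ZMod.val_coe_unit_coprime hau.unit
    rwa [hau.unit_spec] at h
  have hβ : IsPrimitiveRoot (α ^ a.val) (p ^ m) := hα.pow_of_coprime _ hcop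
  have hneg : (-1 : AlgebraicClosure (ZMod 2)) = 1 := CharTwo.neg_eq 1
  rw [Tsum, Tsum, ← Finset.sum_add_distrib]
  have hstep : ∀ j ∈ Finset.Icc 1 m,
      Hsum p g e f j i ((α ^ a.val) ^ p ^ (m - j)) +
        Hsum p g e f j (i + p ^ (m - 1) * f / 2) ((α ^ a.val) ^ p ^ (m - j))
      = if j = 1 then (1 : AlgebraicClosure (ZMod 2)) else 0 := by
    intro j hj
    obtain ⟨hj1, hjm⟩ := Finset.mem_Icc.1 hj
    have hgj := orderOf_zmod_pow_le p hp g hjm hg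
    have hβj : IsPrimitiveRoot ((α ^ a.val) ^ p ^ (m - j)) (p ^ j) :=
      hβ.pow (Nat.pow_pos hp.pos)
        (by rw [← pow_add]; congr 1; omega)
    rw [Hpair p e f c m g hp hodd hpef hc hf2 hj1 hjm hgj _ hβj i]
    split_ifs <;> simp [hneg]
  rw [Finset.sum_congr rfl hstep,
    Finset.sum_ite_eq' (Finset.Icc 1 m) 1 (fun _ => (1 : AlgebraicClosure (ZMod 2)))]
  simp [hm]
end
end

section
/- Let p be an odd prime with 2^{p−1} ≢ 1 (mod p^2), and S(x) = Σ_{t ∈ C_1^{(2p^n)}} x^t over F_2 the generating polynomial of the sequence s^∞. If α_n is a primitive p^n-th root of unity over F_2 and 2 ≡ g^u (mod p^n), then for every a ∈ Z/p^n Z, S(α_n^a) = 1 + T_b^{(p^n)}(α_n^a) + T_{b+u}^{(p^n)}(α_n^a). -/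
open Polynomial Finset

noncomputable section

/-!
Write `β = α ^ a`, so that `β ^ p ^ n = 1`. Apart from `0`, the set `C_1^{(2p^n)}` is the union
of the pieces `r p^{n-j} D_c^{(2p^j)}` with `1 ≤ j ≤ n`, `r ∈ {1, 2}` and `c = (i + b) mod d_j`,
`i < d_j / 2`. An element of such a piece is `p^{n-j} w` with `w ≡ r (mod 2)` and
`w ≡ r g^s (mod p^j)` for some `s ≡ c (mod d_j)`. Hence `β ^ t` only depends on `w mod p^j`, and
since `2 ≡ g^u (mod p^j)` the piece contributes `E_c^{(p^j)}` for `r = 1` and `E_{c+u}^{(p^j)}`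
for `r = 2`, both evaluated at `β ^ p^{n-j}`. The pieces are pairwise disjoint: `j` is read off the
`p`-adic valuation of `t`, `r` off the parity of `w`, and `c mod d_j` off the class of `w` modulo
`p^j`, because `g` still has order `φ(p^j)` there. Summing the contributions gives
`1 + T_b + T_{b+u}`.
-/

theorem pow_eq_pow_of_natCast_eq {G : Type*} [Monoid G] {γ : G} {q a b : ℕ} (hγ : γ ^ q = 1)
    (h : (a : ZMod q) = b) : γ ^ a = γ ^ b := by
  rw [← pow_mod_orderOf, ← pow_mod_orderOf γ b]
  exact congrArg _ (((ZMod.natCast_eq_natCast_iff _ _ _).1 h).of_dvd (orderOf_dvd_of_pow_eq_one hγ))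

theorem orderOf_natCast_eq_totient_of_dvd_s10 {m k g : ℕ} [NeZero k] (h : m ∣ k)
    (hg : orderOf (g : ZMod k) = k.totient) : orderOf (g : ZMod m) = m.totient := by
  have : NeZero m := ⟨fun hm => NeZero.ne k (Nat.eq_zero_of_zero_dvd (hm ▸ h))⟩
  obtain ⟨v, hv⟩ := (orderOf_pos_iff.1 (hg ▸ Nat.totient_pos.2 (NeZero.pos k))).isUnit
  have hv_top : Subgroup.zpowers v = ⊤ := by
    rw [← Subgroup.card_eq_iff_eq_top, Nat.card_zpowers, ← orderOf_units, hv, hg,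
      Nat.card_eq_fintype_card, ZMod.card_units_eq_totient]
  have hw_top : Subgroup.zpowers (ZMod.unitsMap h v) = ⊤ := by
    rw [← MonoidHom.map_zpowers, hv_top,
      Subgroup.map_top_of_surjective _ (ZMod.unitsMap_surjective h)]
  have hw : ((ZMod.unitsMap h v : (ZMod m)ˣ) : ZMod m) = g := by
    simp [ZMod.unitsMap_def, hv]
  rw [← hw, orderOf_units, orderOf_eq_card_of_zpowers_eq_top hw_top, Nat.card_eq_fintype_card,
    ZMod.card_units_eq_totient]

theorem eq_of_prime_pow_mul_eq_prime_pow_mul {p a b w₁ w₂ : ℕ} (hp : p.Prime)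
    (h₁ : ¬p ∣ w₁) (h₂ : ¬p ∣ w₂) (h : p ^ a * w₁ = p ^ b * w₂) : a = b := by
  have : Fact p.Prime := ⟨hp⟩
  have hw₁ : w₁ ≠ 0 := by rintro rfl; exact h₁ (dvd_zero p)
  have hw₂ : w₂ ≠ 0 := by rintro rfl; exact h₂ (dvd_zero p)
  have := congrArg (padicValNat p) h
  rwa [padicValNat.mul (pow_ne_zero _ hp.ne_zero) hw₁,
    padicValNat.mul (pow_ne_zero _ hp.ne_zero) hw₂, padicValNat.prime_pow,
    padicValNat.prime_pow, padicValNat.eq_zero_of_not_dvd h₁, padicValNat.eq_zero_of_not_dvd h₂,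
    add_zero, add_zero] at this

section Dset

variable {q g d e : ℕ}

theorem isUnit_of_mem_Dset (hord : 0 < orderOf (g : ZMod q)) {c : ℕ} {x : ZMod q}
    (hx : x ∈ Dset q g d e c) : IsUnit x := by
  obtain ⟨t, -, rfl⟩ := mem_image.1 hx
  exact (orderOf_pos_iff.1 hord).isUnit.pow _

theorem natCast_pow_eq_pow_iff (hord : orderOf (g : ZMod q) = e * d) (he : 0 < e) (hd : 0 < d)
    {s s' : ℕ} : (g : ZMod q) ^ s = (g : ZMod q) ^ s' ↔ s ≡ s' [MOD e * d] := by
  rw [(orderOf_pos_iff.1 (hord ▸ Nat.mul_pos he hd)).pow_eq_pow_iff_modEq, hord]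

theorem Dset_injOn (hord : orderOf (g : ZMod q) = e * d) (he : 0 < e) (hd : 0 < d) (c : ℕ) :
    Set.InjOn (fun t => (g : ZMod q) ^ (c + t * d)) (range e) := by
  intro t ht t' ht' h
  have := ((natCast_pow_eq_pow_iff hord he hd).1 h).add_left_cancel' c
  exact Nat.ModEq.eq_of_lt_of_lt (this.mul_right_cancel' hd.ne') (mem_range.1 ht) (mem_range.1 ht')

theorem Esum_eq_sum_range {F : Type*} [Field F] (hord : orderOf (g : ZMod q) = e * d)
    (he : 0 < e) (hd : 0 < d) (c : ℕ) (γ : F) :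
    Esum q g d e c γ = ∑ t ∈ range e, γ ^ ((g : ZMod q) ^ (c + t * d)).val :=
  sum_image (Dset_injOn hord he hd c)

theorem modEq_of_mem_Dset_of_mem_Dset (hord : orderOf (g : ZMod q) = e * d) (he : 0 < e)
    (hd : 0 < d) {c c' : ℕ} {x : ZMod q} (hx : x ∈ Dset q g d e c) (hx' : x ∈ Dset q g d e c') :
    c ≡ c' [MOD d] := by
  obtain ⟨t, -, rfl⟩ := mem_image.1 hx
  obtain ⟨t', -, h⟩ := mem_image.1 hx'
  have := ((natCast_pow_eq_pow_iff hord he hd).1 h.symm).of_dvd (dvd_mul_left d e)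
  simpa [Nat.ModEq, Nat.add_mul_mod_self_right] using this

theorem Dset_add_self (hord : orderOf (g : ZMod q) = e * d) (c : ℕ) :
    Dset q g d e (c + d) = Dset q g d e c := by
  have hcycle : ∀ s, (g : ZMod q) ^ (s + e * d) = (g : ZMod q) ^ s := fun s => by
    rw [pow_add, ← hord, pow_orderOf_eq_one, mul_one]
  ext x
  simp only [Dset, mem_image, mem_range]
  constructor
  · rintro ⟨t, ht, rfl⟩
    by_cases hlast : t + 1 < e
    · exact ⟨t + 1, hlast, by ring_nf⟩
    · obtain rfl : e = t + 1 := by omega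
      exact ⟨0, by omega, by rw [← hcycle (c + 0 * d)]; congr 1; ring⟩
  · rintro ⟨_ | t, ht, rfl⟩
    · obtain ⟨e, rfl⟩ := Nat.exists_eq_add_of_lt ht
      exact ⟨e, by omega, by rw [← hcycle (c + 0 * d)]; congr 1; ring⟩
    · exact ⟨t, by omega, by ring_nf⟩

theorem Dset_eq_of_modEq (hord : orderOf (g : ZMod q) = e * d) {c c' : ℕ}
    (h : c ≡ c' [MOD d]) : Dset q g d e c = Dset q g d e c' := by
  have hshift : ∀ c a, Dset q g d e (c + d * a) = Dset q g d e c := fun c a => by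
    induction a with
    | zero => simp
    | succ a ih => rw [mul_add_one, ← add_assoc, Dset_add_self hord, ih]
  have := Nat.div_add_mod c d
  have := Nat.div_add_mod c' d
  rw [← hshift c (c' / d), ← hshift c' (c / d)]
  congr 1
  unfold Nat.ModEq at h
  omega

end Dset

def scaledDset (N M g d e c k : ℕ) : Finset (ZMod N) :=
  (Dset M g d e c).image fun x => ((k * x.val : ℕ) : ZMod N)

section scaledDset

variable {N M q k₀ k r g d e u : ℕ}

theorem val_natCast_mul_val_pow (hN : N = k₀ * M) (hk : k = r * k₀) (s : ℕ) :
    ((k * ((g : ZMod M) ^ s).val : ℕ) : ZMod N).val = k₀ * (r * g ^ s % M) := by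
  rw [← Nat.cast_pow, ZMod.val_natCast, ZMod.val_natCast, hN, hk, mul_comm r, mul_assoc,
    Nat.mul_mod_mul_left, Nat.mul_mod, Nat.mod_mod, ← Nat.mul_mod]

theorem natCast_mul_pow_mod (hqM : q ∣ M) (hr : (r : ZMod q) = (g : ZMod q) ^ u) (s : ℕ) :
    ((r * g ^ s % M : ℕ) : ZMod q) = (g : ZMod q) ^ (u + s) := by
  rw [(ZMod.natCast_eq_natCast_iff _ _ _).2 ((Nat.mod_modEq _ _).of_dvd hqM)]
  push_cast
  rw [hr, pow_add]

theorem exists_of_mem_scaledDset (hN : N = k₀ * M) (hk : k = r * k₀) (hqM : q ∣ M)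
    (h2M : 2 ∣ M) (hg : Odd g) (hr : (r : ZMod q) = (g : ZMod q) ^ u) {c : ℕ} {t : ZMod N}
    (ht : t ∈ scaledDset N M g d e c k) :
    ∃ w, t.val = k₀ * w ∧ w % 2 = r % 2 ∧ (w : ZMod q) ∈ Dset q g d e (u + c) := by
  obtain ⟨x, hx, rfl⟩ := mem_image.1 ht
  obtain ⟨s, hs, rfl⟩ := mem_image.1 hx
  refine ⟨r * g ^ (c + s * d) % M, val_natCast_mul_val_pow hN hk _, ?_, ?_⟩
  · rw [Nat.mod_mod_of_dvd _ h2M, Nat.mul_mod, Nat.odd_iff.1 hg.pow, mul_one, Nat.mod_mod]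
  · rw [natCast_mul_pow_mod hqM hr, ← add_assoc]
    exact mem_image_of_mem _ hs

theorem sum_scaledDset {F : Type*} [Field F] [NeZero q] (hN : N = k₀ * M) (hk : k = r * k₀)
    (hk₀ : 0 < k₀) (hqM : q ∣ M) (hr : (r : ZMod q) = (g : ZMod q) ^ u)
    (hord : orderOf (g : ZMod q) = e * d) (he : 0 < e) (hd : 0 < d) (c : ℕ) {β : F}
    (hβ : β ^ (k₀ * q) = 1) :
    ∑ t ∈ scaledDset N M g d e c k, β ^ t.val = Esum q g d e (u + c) (β ^ k₀) := by
  have hw := natCast_mul_pow_mod (g := g) hqM hr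
  rw [scaledDset, Dset, image_image, sum_image, Esum_eq_sum_range hord he hd]
  · refine sum_congr rfl fun s _ => ?_
    rw [Function.comp_apply, val_natCast_mul_val_pow hN hk, pow_mul]
    refine pow_eq_pow_of_natCast_eq (by rwa [← pow_mul]) ?_
    rw [ZMod.natCast_zmod_val, hw, add_assoc]
  · intro s hs s' hs' h
    have hval := congrArg ZMod.val h
    simp only [Function.comp_apply, val_natCast_mul_val_pow hN hk] at hval
    refine Dset_injOn hord he hd (u + c) hs hs' ?_
    simp only [add_assoc, ← hw, Nat.eq_of_mul_eq_mul_left hk₀ hval]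

end scaledDset

/-- The level-`j` part `p^{n-j} ⋃_{i < d_j/2} (D_{i+b}^{(2p^j)} ∪ 2 D_{i+b}^{(2p^j)})` of
`C_1^{(2p^n)}`. -/
def coneLevel (p g e f b n j : ℕ) : Finset (ZMod (2 * p ^ n)) :=
  (range (p ^ (j - 1) * f / 2)).biUnion fun i =>
    scaledDset (2 * p ^ n) (2 * p ^ j) g (p ^ (j - 1) * f) e ((i + b) % (p ^ (j - 1) * f))
        (p ^ (n - j)) ∪
      scaledDset (2 * p ^ n) (2 * p ^ j) g (p ^ (j - 1) * f) e ((i + b) % (p ^ (j - 1) * f))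
        (2 * p ^ (n - j))

theorem Cone_eq_insert_biUnion_coneLevel (p g e f b n : ℕ) :
    Cone p g e f b n = insert 0 ((Icc 1 n).biUnion (coneLevel p g e f b n)) :=
  rfl

section Cone

variable {p e f n g j : ℕ}

theorem two_mul_pow_eq_pow_sub_mul (hjn : j ≤ n) : 2 * p ^ n = p ^ (n - j) * (2 * p ^ j) := by
  rw [mul_left_comm, ← pow_add, Nat.sub_add_cancel hjn]

theorem natCast_two_eq_pow_of_le {u : ℕ} (hu : (2 : ZMod (p ^ n)) = (g : ZMod (p ^ n)) ^ u)
    (hjn : j ≤ n) : ((2 : ℕ) : ZMod (p ^ j)) = (g : ZMod (p ^ j)) ^ u := by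
  have := congrArg (ZMod.castHom (pow_dvd_pow p hjn) (ZMod (p ^ j))) hu
  rwa [map_pow, map_natCast, map_ofNat, ← Nat.cast_ofNat] at this

theorem orderOf_natCast_prime_pow (hp : p.Prime) (hpef : p = e * f + 1)
    (hg : orderOf (g : ZMod (2 * p ^ n)) = (2 * p ^ n).totient) (hj1 : 1 ≤ j) (hjn : j ≤ n) :
    orderOf (g : ZMod (p ^ j)) = e * (p ^ (j - 1) * f) := by
  have : NeZero (2 * p ^ n) := ⟨mul_ne_zero two_ne_zero (pow_ne_zero _ hp.ne_zero)⟩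
  rw [orderOf_natCast_eq_totient_of_dvd_s10 ((pow_dvd_pow p hjn).trans (dvd_mul_left _ 2)) hg,
    Nat.totient_prime_pow hp hj1, show p - 1 = e * f by omega]
  ring

theorem exists_of_mem_scaledDset_prime_pow (hp : p.Prime) (hpef : p = e * f + 1) (he : 0 < e)
    (hf : 0 < f) (hgodd : Odd g) (hg : orderOf (g : ZMod (2 * p ^ n)) = (2 * p ^ n).totient)
    (hj1 : 1 ≤ j) (hjn : j ≤ n) {k r u c : ℕ} (hk : k = r * p ^ (n - j))
    (hr : (r : ZMod (p ^ j)) = (g : ZMod (p ^ j)) ^ u) {t : ZMod (2 * p ^ n)}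
    (ht : t ∈ scaledDset (2 * p ^ n) (2 * p ^ j) g (p ^ (j - 1) * f) e c k) :
    ∃ w, t.val = p ^ (n - j) * w ∧ w % 2 = r % 2 ∧ ¬p ∣ w ∧
      (w : ZMod (p ^ j)) ∈ Dset (p ^ j) g (p ^ (j - 1) * f) e (u + c) := by
  obtain ⟨w, hw, hpar, hmem⟩ := exists_of_mem_scaledDset (two_mul_pow_eq_pow_sub_mul hjn) hk
    (dvd_mul_left _ 2) (dvd_mul_right 2 _) hgodd hr ht
  have hcop : w.Coprime (p ^ j) := (ZMod.isUnit_iff_coprime w _).1 <| isUnit_of_mem_Dset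
    (by rw [orderOf_natCast_prime_pow hp hpef hg hj1 hjn]; have := hp.pos; positivity) hmem
  exact ⟨w, hw, hpar, (hp.coprime_iff_not_dvd.1 (hcop.coprime_dvd_right
    (dvd_pow_self p (by omega))).symm), hmem⟩

theorem modEq_of_mem_scaledDset_prime_pow (hp : p.Prime) (hpef : p = e * f + 1) (he : 0 < e)
    (hf : 0 < f) (hgodd : Odd g) (hg : orderOf (g : ZMod (2 * p ^ n)) = (2 * p ^ n).totient)
    (hj1 : 1 ≤ j) (hjn : j ≤ n) {k k' r r' u u' c c' : ℕ} (hk : k = r * p ^ (n - j))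
    (hk' : k' = r' * p ^ (n - j)) (hr : (r : ZMod (p ^ j)) = (g : ZMod (p ^ j)) ^ u)
    (hr' : (r' : ZMod (p ^ j)) = (g : ZMod (p ^ j)) ^ u') {t : ZMod (2 * p ^ n)}
    (ht : t ∈ scaledDset (2 * p ^ n) (2 * p ^ j) g (p ^ (j - 1) * f) e c k)
    (ht' : t ∈ scaledDset (2 * p ^ n) (2 * p ^ j) g (p ^ (j - 1) * f) e c' k') :
    r % 2 = r' % 2 ∧ u + c ≡ u' + c' [MOD p ^ (j - 1) * f] := by
  obtain ⟨w, hw, hpar, -, hmem⟩ :=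
    exists_of_mem_scaledDset_prime_pow hp hpef he hf hgodd hg hj1 hjn hk hr ht
  obtain ⟨w', hw', hpar', -, hmem'⟩ :=
    exists_of_mem_scaledDset_prime_pow hp hpef he hf hgodd hg hj1 hjn hk' hr' ht'
  obtain rfl : w = w' := Nat.eq_of_mul_eq_mul_left (pow_pos hp.pos _) (hw.symm.trans hw')
  exact ⟨hpar.symm.trans hpar', modEq_of_mem_Dset_of_mem_Dset
    (orderOf_natCast_prime_pow hp hpef hg hj1 hjn) he (by have := hp.pos; positivity) hmem hmem'⟩

theorem exists_of_mem_coneLevel (hp : p.Prime) (hpef : p = e * f + 1) (he : 0 < e)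
    (hf : 0 < f) (hgodd : Odd g) (hg : orderOf (g : ZMod (2 * p ^ n)) = (2 * p ^ n).totient)
    {u : ℕ} (hu : (2 : ZMod (p ^ n)) = (g : ZMod (p ^ n)) ^ u) {b : ℕ} (hj : j ∈ Icc 1 n)
    {t : ZMod (2 * p ^ n)} (ht : t ∈ coneLevel p g e f b n j) :
    ∃ w, t.val = p ^ (n - j) * w ∧ ¬p ∣ w := by
  obtain ⟨hj1, hjn⟩ := mem_Icc.1 hj
  obtain ⟨i, -, hA | hB⟩ : ∃ i, _ ∧ (_ ∨ _) := by simpa [coneLevel] using ht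
  · obtain ⟨w, hw, -, hpw, -⟩ := exists_of_mem_scaledDset_prime_pow hp hpef he hf hgodd hg hj1 hjn
      (one_mul _).symm (by simp : ((1 : ℕ) : ZMod (p ^ j)) = (g : ZMod (p ^ j)) ^ 0) hA
    exact ⟨w, hw, hpw⟩
  · obtain ⟨w, hw, -, hpw, -⟩ := exists_of_mem_scaledDset_prime_pow hp hpef he hf hgodd hg hj1 hjn
      rfl (natCast_two_eq_pow_of_le hu hjn) hB
    exact ⟨w, hw, hpw⟩

theorem zero_notMem_biUnion_coneLevel (hp : p.Prime) (hpef : p = e * f + 1) (he : 0 < e)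
    (hf : 0 < f) (hgodd : Odd g) (hg : orderOf (g : ZMod (2 * p ^ n)) = (2 * p ^ n).totient)
    {u : ℕ} (hu : (2 : ZMod (p ^ n)) = (g : ZMod (p ^ n)) ^ u) (b : ℕ) :
    (0 : ZMod (2 * p ^ n)) ∉ (Icc 1 n).biUnion (coneLevel p g e f b n) := by
  intro h
  obtain ⟨j, hj, h0⟩ := mem_biUnion.1 h
  obtain ⟨w, hw, hpw⟩ := exists_of_mem_coneLevel hp hpef he hf hgodd hg hu hj h0
  rw [ZMod.val_zero, eq_comm, mul_eq_zero] at hw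
  rcases hw with hw | rfl
  · exact pow_ne_zero _ hp.ne_zero hw
  · exact hpw (dvd_zero p)

theorem coneLevel_pairwiseDisjoint (hp : p.Prime) (hpef : p = e * f + 1) (he : 0 < e)
    (hf : 0 < f) (hgodd : Odd g) (hg : orderOf (g : ZMod (2 * p ^ n)) = (2 * p ^ n).totient)
    {u : ℕ} (hu : (2 : ZMod (p ^ n)) = (g : ZMod (p ^ n)) ^ u) (b : ℕ) :
    (Icc 1 n : Set ℕ).PairwiseDisjoint (coneLevel p g e f b n) := by
  intro j hj j' hj' hne
  rw [Function.onFun, disjoint_left]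
  intro t ht ht'
  obtain ⟨w, hw, hpw⟩ := exists_of_mem_coneLevel hp hpef he hf hgodd hg hu hj ht
  obtain ⟨w', hw', hpw'⟩ := exists_of_mem_coneLevel hp hpef he hf hgodd hg hu hj' ht'
  have := eq_of_prime_pow_mul_eq_prime_pow_mul hp hpw hpw' (hw.symm.trans hw')
  simp only [coe_Icc, Set.mem_Icc] at hj hj'
  omega

theorem coneLevel_pieces_pairwiseDisjoint (hp : p.Prime) (hpef : p = e * f + 1) (he : 0 < e)
    (hf : 0 < f) (hgodd : Odd g) (hg : orderOf (g : ZMod (2 * p ^ n)) = (2 * p ^ n).totient)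
    {u : ℕ} (hu : (2 : ZMod (p ^ n)) = (g : ZMod (p ^ n)) ^ u) (b : ℕ) (hj1 : 1 ≤ j)
    (hjn : j ≤ n) :
    (range (p ^ (j - 1) * f / 2) : Set ℕ).PairwiseDisjoint fun i =>
      scaledDset (2 * p ^ n) (2 * p ^ j) g (p ^ (j - 1) * f) e ((i + b) % (p ^ (j - 1) * f))
          (p ^ (n - j)) ∪
        scaledDset (2 * p ^ n) (2 * p ^ j) g (p ^ (j - 1) * f) e ((i + b) % (p ^ (j - 1) * f))
          (2 * p ^ (n - j)) := by
  have h1 : ((1 : ℕ) : ZMod (p ^ j)) = (g : ZMod (p ^ j)) ^ 0 := by simp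
  have h2 := natCast_two_eq_pow_of_le hu hjn
  have key := fun {k k' r r' v v' c c'} => modEq_of_mem_scaledDset_prime_pow (k := k) (k' := k')
    (r := r) (r' := r') (u := v) (u' := v') (c := c) (c' := c') hp hpef he hf hgodd hg hj1 hjn
  intro i hi i' hi' hne
  rw [Function.onFun, disjoint_left]
  intro t ht ht'
  apply hne
  have hmod : (i + b) % (p ^ (j - 1) * f) ≡ (i' + b) % (p ^ (j - 1) * f)
      [MOD p ^ (j - 1) * f] := by
    rcases mem_union.1 ht with hA | hB <;> rcases mem_union.1 ht' with hA' | hB'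
    · simpa using (key (one_mul _).symm (one_mul _).symm h1 h1 hA hA').2
    · exact absurd (key (one_mul _).symm rfl h1 h2 hA hB').1 (by norm_num)
    · exact absurd (key rfl (one_mul _).symm h2 h1 hB hA').1 (by norm_num)
    · exact (key rfl rfl h2 h2 hB hB').2.add_left_cancel' u
  have hlt : p ^ (j - 1) * f / 2 ≤ p ^ (j - 1) * f := Nat.div_le_self _ _
  simp only [coe_range, Set.mem_Iio] at hi hi'
  exact Nat.ModEq.eq_of_lt_of_lt (((Nat.mod_modEq _ _).symm.trans
    (hmod.trans (Nat.mod_modEq _ _))).add_right_cancel' b) (by omega) (by omega)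

theorem sum_coneLevel {F : Type*} [Field F] (hp : p.Prime) (hpef : p = e * f + 1) (he : 0 < e)
    (hf : 0 < f) (hgodd : Odd g) (hg : orderOf (g : ZMod (2 * p ^ n)) = (2 * p ^ n).totient)
    {u : ℕ} (hu : (2 : ZMod (p ^ n)) = (g : ZMod (p ^ n)) ^ u) (b : ℕ) (hj1 : 1 ≤ j)
    (hjn : j ≤ n) {β : F} (hβ : β ^ p ^ n = 1) :
    ∑ t ∈ coneLevel p g e f b n j, β ^ t.val =
      Hsum p g e f j b (β ^ p ^ (n - j)) + Hsum p g e f j (b + u) (β ^ p ^ (n - j)) := by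
  have : NeZero (p ^ j) := ⟨pow_ne_zero _ hp.ne_zero⟩
  have hord := orderOf_natCast_prime_pow hp hpef hg hj1 hjn
  have hd : 0 < p ^ (j - 1) * f := by have := hp.pos; positivity
  have hβj : β ^ (p ^ (n - j) * p ^ j) = 1 := by rwa [← pow_add, Nat.sub_add_cancel hjn]
  have h1 : ((1 : ℕ) : ZMod (p ^ j)) = (g : ZMod (p ^ j)) ^ 0 := by simp
  have h2 := natCast_two_eq_pow_of_le hu hjn
  rw [coneLevel,
    sum_biUnion (coneLevel_pieces_pairwiseDisjoint hp hpef he hf hgodd hg hu b hj1 hjn), Hsum, Hsum,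
    ← sum_add_distrib]
  refine sum_congr rfl fun i _ => ?_
  set c := (i + b) % (p ^ (j - 1) * f)
  have hAB : Disjoint (scaledDset (2 * p ^ n) (2 * p ^ j) g (p ^ (j - 1) * f) e c (p ^ (n - j)))
      (scaledDset (2 * p ^ n) (2 * p ^ j) g (p ^ (j - 1) * f) e c (2 * p ^ (n - j))) :=
    disjoint_left.2 fun _ hA hB => absurd (modEq_of_mem_scaledDset_prime_pow hp hpef he hf hgodd
      hg hj1 hjn (one_mul _).symm rfl h1 h2 hA hB).1 (by norm_num)
  have hc : u + c ≡ (i + (b + u)) % (p ^ (j - 1) * f) [MOD p ^ (j - 1) * f] :=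
    calc u + c ≡ u + (i + b) [MOD p ^ (j - 1) * f] := (Nat.mod_modEq _ _).add_left u
      _ = i + (b + u) := by ring
      _ ≡ (i + (b + u)) % (p ^ (j - 1) * f) [MOD p ^ (j - 1) * f] := (Nat.mod_modEq _ _).symm
  rw [sum_union hAB, sum_scaledDset (two_mul_pow_eq_pow_sub_mul hjn) (one_mul _).symm
      (pow_pos hp.pos _) (dvd_mul_left _ 2) h1 hord he hd c hβj,
    sum_scaledDset (two_mul_pow_eq_pow_sub_mul hjn) rfl (pow_pos hp.pos _) (dvd_mul_left _ 2) h2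
      hord he hd c hβj, zero_add]
  unfold Esum
  rw [Dset_eq_of_modEq hord hc]

end Cone

theorem stmt10_general (p e f n g b u : ℕ) (hp : p.Prime) (hpef : p = e * f + 1)
    (he : 0 < e) (hf : 0 < f) (hgodd : Odd g)
    (hg : orderOf (g : ZMod (2 * p ^ n)) = Nat.totient (2 * p ^ n))
    (hu : (2 : ZMod (p ^ n)) = (g : ZMod (p ^ n)) ^ u)
    (α : AlgebraicClosure (ZMod 2)) (hα : IsPrimitiveRoot α (p ^ n)) :
    ∀ a : ZMod (p ^ n),
      Seval p g e f b n (α ^ a.val) =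
        1 + Tsum p g e f n b (α ^ a.val) + Tsum p g e f n (b + u) (α ^ a.val) := by
  intro a
  have hβ : (α ^ a.val) ^ p ^ n = 1 := by
    rw [← pow_mul, mul_comm, pow_mul, hα.pow_eq_one, one_pow]
  rw [Seval, Cone_eq_insert_biUnion_coneLevel,
    sum_insert (zero_notMem_biUnion_coneLevel hp hpef he hf hgodd hg hu b),
    sum_biUnion (coneLevel_pairwiseDisjoint hp hpef he hf hgodd hg hu b), ZMod.val_zero, pow_zero,
    Tsum, Tsum, add_assoc, ← sum_add_distrib]
  congr 1
  exact sum_congr rfl fun j hj =>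
    sum_coneLevel hp hpef he hf hgodd hg hu b (mem_Icc.1 hj).1 (mem_Icc.1 hj).2 hβ

/-- For every `a`, `S(α_n^a) = 1 + T_b^{(p^n)}(α_n^a) + T_{b+u}^{(p^n)}(α_n^a)`. -/
theorem stmt10 (p e f n g b u : ℕ) (hp : p.Prime) (hodd : Odd p) (hpef : p = e * f + 1)
    (he : 0 < e) (hf : 0 < f) (hfe : Even f) (hn : 1 ≤ n) (hgodd : Odd g)
    (hg : orderOf (g : ZMod (2 * p ^ n)) = Nat.totient (2 * p ^ n))
    (hw : (2 : ZMod (p ^ 2)) ^ (p - 1) ≠ 1)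
    (hb : b < p ^ (n - 1) * f)
    (hu : (2 : ZMod (p ^ n)) = (g : ZMod (p ^ n)) ^ u)
    (α : AlgebraicClosure (ZMod 2)) (hα : IsPrimitiveRoot α (p ^ n)) :
    ∀ a : ZMod (p ^ n),
      Seval p g e f b n (α ^ a.val) =
        1 + Tsum p g e f n b (α ^ a.val) + Tsum p g e f n (b + u) (α ^ a.val) :=
  stmt10_general p e f n g b u hp hpef he hf hgodd hg hu α hα
end
end

section
/- Let p = ef+1 be an odd prime with f even, v = gcd((p−1)/ord_p(2), f), and 2 ≡ g^u (mod p). If v = f, then H_k^{(p)}(α_1) + H_{k+u}^{(p)}(α_1) = 0 for all k ∈ Z/fZ; and if v divides f/2, or v = 2 with v ≠ f, then H_k^{(p)}(α_1) + H_{k+u}^{(p)}(α_1) ≠ 0 for all k ∈ Z/fZ. -/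
open Polynomial Finset

noncomputable section

/-!
Write `H_k(α) = ∑_{t ∈ A_k} α^t` with `A_k = D_k ∪ … ∪ D_{k+f/2-1}`, so that `A_{s+k} = g^s A_k`.
Squaring multiplies exponents by `2 = g^u`, hence `H_k² = H_{k+u}`; and since `A_k`, `A_{k+f/2}`
partition `(ℤ/p)^*`, `H_k + H_{k+f/2} = ∑_{t ≠ 0} α^t = 1`. Moreover `ord_p(2) = (p-1)/gcd(p-1, u)`,
so `v = gcd(u, f)`.

If `f ∣ u` the two summands coincide. Otherwise `H_k + H_{k+u} = 0` says `H_k ∈ 𝔽₂`, so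
`H_{k+tu} = H_k` for all `t`, i.e. `H_{k+cv} = H_k` by Bézout. For `v ∣ f/2` this contradicts
`H_k + H_{k+f/2} = 1`. For `v = 2` with `f/2` odd, every index is `k + 2c` or `k + 2c + f/2`,
so every `H_m` lies in `𝔽₂` and `m ↦ H_m` has period `u`. But any period `w` of `m ↦ H_m` gives
`A_w = A_0`, because a subset of `ℤ/p` is determined by the values of its generating polynomial at
all `p`-th roots of unity; comparing where `g^0` and `g^w` lie then forces `f ∣ w`, so `v = f`.
-/

section SetPoly

variable {R : Type*} [CommRing R] {n : ℕ}

def setPoly (A : Finset (ZMod n)) : R[X] :=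
  ∑ t ∈ A, X ^ t.val

theorem eval_setPoly (x : R) (A : Finset (ZMod n)) :
    eval x (setPoly A) = ∑ t ∈ A, x ^ t.val := by
  simp [setPoly, eval_finsetSum]

theorem eval_setPoly_sq [CharP R 2] (x : R) (A : Finset (ZMod n)) :
    eval x (setPoly A) ^ 2 = eval (x ^ 2) (setPoly A) := by
  simp only [eval_setPoly, sum_pow_char, ← pow_mul, mul_comm]

theorem IsPrimitiveRoot.pow_mod {α : R} (hα : IsPrimitiveRoot α n) (m : ℕ) :
    α ^ (m % n) = α ^ m :=
  hα.eq_orderOf ▸ pow_mod_orderOf α m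

theorem eval_pow_setPoly {α : R} (hα : IsPrimitiveRoot α n) {c : ℕ} (hc : IsUnit (c : ZMod n))
    (A : Finset (ZMod n)) :
    eval (α ^ c) (setPoly A) = eval α (setPoly (A.image ((c : ZMod n) * ·))) := by
  rw [eval_setPoly, eval_setPoly, Finset.sum_image fun _ _ _ _ h => hc.mul_left_cancel h]
  refine Finset.sum_congr rfl fun t _ => ?_
  rw [ZMod.val_mul, ZMod.val_natCast, hα.pow_mod, pow_mul, hα.pow_mod]

variable [NeZero n]

theorem natDegree_setPoly_lt (A : Finset (ZMod n)) : (setPoly A : R[X]).natDegree < n := by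
  refine lt_of_le_of_lt (natDegree_sum_le_of_forall_le _ _ (n := n - 1) fun t _ => ?_)
    (Nat.sub_lt (NeZero.pos n) one_pos)
  have := ZMod.val_lt t
  exact (natDegree_X_pow_le _).trans (by omega)

theorem coeff_setPoly (A : Finset (ZMod n)) (x : ZMod n) :
    (setPoly A : R[X]).coeff x.val = if x ∈ A then 1 else 0 := by
  simp only [setPoly, finsetSum_coeff, coeff_X_pow, (ZMod.val_injective n).eq_iff]
  rw [Finset.sum_ite_eq]

theorem setPoly_injective [Nontrivial R] :
    Function.Injective (setPoly : Finset (ZMod n) → R[X]) := by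
  intro A B h
  ext x
  have := congrArg (coeff · x.val) h
  simp only [coeff_setPoly] at this
  split_ifs at this <;> simp_all

theorem eq_of_forall_eval_pow_setPoly_eq [IsDomain R] {α : R} (hα : IsPrimitiveRoot α n)
    {A B : Finset (ZMod n)}
    (h : ∀ j < n, eval (α ^ j) (setPoly A) = eval (α ^ j) (setPoly B)) : A = B := by
  refine setPoly_injective (eq_of_natDegree_lt_card_of_eval_eq (R := R) _ _
    (f := fun j : Fin n => α ^ (j : ℕ)) (fun i j hij => Fin.ext (hα.pow_inj i.2 j.2 hij))
    (fun j => h j j.2) ?_)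
  simpa using max_lt (natDegree_setPoly_lt A) (natDegree_setPoly_lt B)

theorem eval_setPoly_univ_erase_zero [IsDomain R] {α : R} (hα : IsPrimitiveRoot α n)
    (hn : 1 < n) : eval α (setPoly (univ.erase 0 : Finset (ZMod n))) = -1 := by
  have huniv : ∑ t : ZMod n, α ^ t.val = 0 := by
    obtain ⟨m, rfl⟩ : ∃ m, n = m + 1 := ⟨n - 1, by omega⟩
    exact (Fin.sum_univ_eq_sum_range (α ^ ·) (m + 1)).trans (hα.geom_sum_eq_zero hn)
  rw [eval_setPoly, ← add_eq_zero_iff_eq_neg, ← huniv, ← Finset.sum_erase_add _ _ (mem_univ 0),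
    ZMod.val_zero, pow_zero]

end SetPoly

theorem Function.Periodic.sum_range_add {M : Type*} [AddCommGroup M] {φ : ℕ → M} {c : ℕ}
    (hφ : Function.Periodic φ c) (k : ℕ) : ∑ i ∈ range c, φ (i + k) = ∑ i ∈ range c, φ i := by
  induction k with
  | zero => rfl
  | succ k ih =>
    have h := (sum_range_succ' (fun i => φ (i + k)) c).symm.trans
      (sum_range_succ (fun i => φ (i + k)) c)
    rw [show φ (c + k) = φ (0 + k) by rw [zero_add, add_comm, hφ], add_left_inj, ih] at h
    simpa only [add_assoc, add_comm 1 k] using h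

theorem Nat.exists_mul_modEq_gcd (u f : ℕ) : ∃ t, t * u ≡ Nat.gcd u f [MOD f] := by
  rcases lt_or_ge (Nat.gcd u f) f with h | h
  · obtain ⟨t, -, ht⟩ := Nat.exists_mul_mod_eq_gcd h
    exact ⟨t, by rw [Nat.ModEq, mul_comm, ht, Nat.mod_eq_of_lt h]⟩
  · rcases f.eq_zero_or_pos with rfl | hf
    · exact ⟨1, by simp⟩
    · refine ⟨0, ?_⟩
      rw [le_antisymm (Nat.gcd_le_right (m := u) hf) h, zero_mul, Nat.ModEq, Nat.mod_self,
        Nat.zero_mod]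

theorem IsPrimitiveRoot.gcd_div_orderOf_pow {M : Type*} [CommMonoid M] {ζ : M} {n f : ℕ}
    (hζ : IsPrimitiveRoot ζ n) (hn : n ≠ 0) (hfn : f ∣ n) (u : ℕ) :
    Nat.gcd (n / orderOf (ζ ^ u)) f = Nat.gcd u f := by
  rw [(hζ.isOfFinOrder hn).orderOf_pow, ← hζ.eq_orderOf,
    Nat.div_div_self (Nat.gcd_dvd_left n u) hn, Nat.gcd_assoc,
    Nat.gcd_eq_right ((Nat.gcd_dvd_right u f).trans hfn)]

section CyclotomicClasses

variable {p e f g : ℕ}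

theorem Dset_add (m d s j : ℕ) :
    Dset m g d e (s + j) = (Dset m g d e j).image (((g : ZMod m) ^ s) * ·) := by
  simp only [Dset, Finset.image_image, Function.comp_def, ← pow_add, add_assoc]

def Hset (p g e f k : ℕ) : Finset (ZMod p) :=
  (range (f / 2)).biUnion fun i => Dset p g f e ((i + k) % f)

theorem Hsum_one_eq_sum {F : Type*} [Field F] (k : ℕ) (α : F) :
    Hsum p g e f 1 k α = ∑ i ∈ range (f / 2), eval α (setPoly (Dset p g f e ((i + k) % f))) := by
  simp only [Hsum, Nat.sub_self, pow_zero, one_mul, pow_one, eval_setPoly]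
  rfl

variable [Fact p.Prime]
variable (he : 0 < e) (hf : 0 < f) (hg : IsPrimitiveRoot (g : ZMod p) (e * f))
include he hf hg

theorem mem_Dset_iff {x : ZMod p} {j : ℕ} :
    x ∈ Dset p g f e j ↔ x ^ e = (g : ZMod p) ^ (j * e) := by
  have hg0 : (g : ZMod p) ≠ 0 := hg.ne_zero (by positivity)
  simp only [Dset, mem_image, mem_range]
  constructor
  · rintro ⟨t, -, rfl⟩
    rw [← pow_mul, add_mul, pow_add, mul_assoc, mul_comm f e, pow_mul' _ t, hg.pow_eq_one,
      one_pow, mul_one]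
  · intro hx
    have hroot : (x / (g : ZMod p) ^ j) ^ e = 1 := by
      rw [div_pow, hx, ← pow_mul, div_self (pow_ne_zero _ hg0)]
    have := NeZero.of_pos he
    obtain ⟨t, ht, hxt⟩ := (hg.pow (by positivity) (mul_comm e f)).eq_pow_of_pow_eq_one hroot
    refine ⟨t, ht, ?_⟩
    rw [pow_add, mul_comm t, pow_mul, hxt, mul_div_cancel₀ _ (pow_ne_zero _ hg0)]

theorem pow_mem_Dset_iff {a j : ℕ} : (g : ZMod p) ^ a ∈ Dset p g f e j ↔ a ≡ j [MOD f] := by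
  rw [mem_Dset_iff he hf hg, ← pow_mul, (hg.isOfFinOrder (by positivity)).pow_eq_pow_iff_modEq,
    ← hg.eq_orderOf, mul_comm e f]
  exact Nat.ModEq.mul_right_cancel_iff' he.ne'

theorem pow_mul_eq_pow_mul_iff {j j' : ℕ} :
    (g : ZMod p) ^ (j * e) = (g : ZMod p) ^ (j' * e) ↔ j ≡ j' [MOD f] := by
  rw [← pow_mem_Dset_iff he hf hg, mem_Dset_iff he hf hg, ← pow_mul]

theorem Dset_congr {j j' : ℕ} (h : j ≡ j' [MOD f]) : Dset p g f e j = Dset p g f e j' := by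
  ext x
  rw [mem_Dset_iff he hf hg, mem_Dset_iff he hf hg, (pow_mul_eq_pow_mul_iff he hf hg).mpr h]

theorem disjoint_Dset {j j' : ℕ} (h : ¬ j ≡ j' [MOD f]) :
    Disjoint (Dset p g f e j) (Dset p g f e j') := by
  refine Finset.disjoint_left.mpr fun x hx hx' => h ?_
  rw [mem_Dset_iff he hf hg] at hx hx'
  exact (pow_mul_eq_pow_mul_iff he hf hg).mp (hx.symm.trans hx')

theorem pairwiseDisjoint_Dset_comp {s : Set ℕ} {φ : ℕ → ℕ}
    (hφ : ∀ i ∈ s, ∀ j ∈ s, φ i ≡ φ j [MOD f] → i = j) :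
    s.PairwiseDisjoint fun i => Dset p g f e (φ i) :=
  fun i hi j hj hne => disjoint_Dset he hf hg fun h => hne (hφ i hi j hj h)

theorem exists_pow_eq_of_ne_zero (hpef : p = e * f + 1) {x : ZMod p} (hx : x ≠ 0) :
    ∃ a, (g : ZMod p) ^ a = x := by
  have : NeZero (e * f) := NeZero.of_pos (by positivity)
  have hxp : x ^ (e * f) = 1 := by
    simpa [hpef] using ZMod.pow_card_sub_one_eq_one hx
  obtain ⟨a, -, hax⟩ := hg.eq_pow_of_pow_eq_one hxp
  exact ⟨a, hax⟩

theorem biUnion_range_Dset (hpef : p = e * f + 1) :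
    (range f).biUnion (Dset p g f e) = univ.erase 0 := by
  ext x
  simp only [mem_biUnion, mem_range, mem_erase, mem_univ, and_true]
  constructor
  · rintro ⟨j, -, hx⟩ rfl
    rw [mem_Dset_iff he hf hg, zero_pow he.ne'] at hx
    exact pow_ne_zero _ (hg.ne_zero (by positivity)) hx.symm
  · intro hx
    obtain ⟨a, rfl⟩ := exists_pow_eq_of_ne_zero he hf hg hpef hx
    exact ⟨a % f, Nat.mod_lt a hf, (pow_mem_Dset_iff he hf hg).mpr (Nat.mod_modEq a f).symm⟩

theorem Hset_congr {k k' : ℕ} (h : k ≡ k' [MOD f]) : Hset p g e f k = Hset p g e f k' :=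
  biUnion_congr rfl fun i _ => Dset_congr he hf hg <|
    (Nat.mod_modEq _ f).trans ((h.add_left i).trans (Nat.mod_modEq _ f).symm)

theorem Hset_add (s k : ℕ) :
    Hset p g e f (s + k) = (Hset p g e f k).image (((g : ZMod p) ^ s) * ·) := by
  rw [Hset, Hset, biUnion_image]
  refine biUnion_congr rfl fun i _ => ?_
  rw [← Dset_add]
  refine Dset_congr he hf hg ((Nat.mod_modEq _ f).trans ?_)
  rw [add_left_comm]
  exact ((Nat.mod_modEq _ f).add_left s).symm

theorem pow_mem_Hset_iff {a k : ℕ} :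
    (g : ZMod p) ^ a ∈ Hset p g e f k ↔ ∃ i < f / 2, a ≡ i + k [MOD f] := by
  simp only [Hset, mem_biUnion, mem_range, pow_mem_Dset_iff he hf hg]
  exact exists_congr fun i => and_congr_right fun _ =>
    ⟨fun h => h.trans (Nat.mod_modEq _ f), fun h => h.trans (Nat.mod_modEq _ f).symm⟩

variable {F : Type*} [Field F]

theorem Hsum_one_eq_eval (k : ℕ) (α : F) :
    Hsum p g e f 1 k α = eval α (setPoly (Hset p g e f k)) := by
  rw [Hsum_one_eq_sum, Hset, eval_setPoly, sum_biUnion]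
  · simp only [eval_setPoly]
  refine pairwiseDisjoint_Dset_comp he hf hg fun i hi j hj h => ?_
  simp only [coe_range, Set.mem_Iio] at hi hj
  exact (((Nat.mod_modEq _ f).symm.trans (h.trans (Nat.mod_modEq _ f))).add_right_cancel' k)
    |>.eq_of_lt_of_lt (by omega) (by omega)

theorem Hsum_congr {k k' : ℕ} (h : k ≡ k' [MOD f]) (α : F) :
    Hsum p g e f 1 k α = Hsum p g e f 1 k' α := by
  rw [Hsum_one_eq_eval he hf hg, Hsum_one_eq_eval he hf hg, Hset_congr he hf hg h]

variable {α : F} (hα : IsPrimitiveRoot α p)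
include hα

theorem Hsum_add_eq_eval (s k : ℕ) :
    Hsum p g e f 1 (s + k) α = eval (α ^ ((g : ZMod p) ^ s).val) (setPoly (Hset p g e f k)) := by
  rw [eval_pow_setPoly hα (by simpa using (hg.isUnit (by positivity)).pow s),
    ZMod.natCast_zmod_val, ← Hset_add he hf hg, Hsum_one_eq_eval he hf hg]

theorem Hsum_add_eq_sq [CharP F 2] {u : ℕ} (hu : (2 : ZMod p) = (g : ZMod p) ^ u) (k : ℕ) :
    Hsum p g e f 1 (k + u) α = Hsum p g e f 1 k α ^ 2 := by
  rw [add_comm, Hsum_add_eq_eval he hf hg hα, ← hu, ZMod.val_two_eq_two_mod, hα.pow_mod,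
    Hsum_one_eq_eval he hf hg, eval_setPoly_sq]

theorem Hsum_add_Hsum_add_half [CharP F 2] (hpef : p = e * f + 1) (hfe : Even f) (k : ℕ) :
    Hsum p g e f 1 k α + Hsum p g e f 1 (k + f / 2) α = 1 := by
  set ψ : ℕ → F := fun j => eval α (setPoly (Dset p g f e j))
  obtain ⟨h, rfl⟩ := hfe
  rw [Hsum_one_eq_sum, Hsum_one_eq_sum, show (h + h) / 2 = h by omega]
  calc ∑ i ∈ range h, ψ ((i + k) % (h + h)) + ∑ i ∈ range h, ψ ((i + (k + h)) % (h + h))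
      = ∑ i ∈ range (h + h), ψ ((i + k) % (h + h)) := by
        rw [sum_range_add]
        congr! 3 with i
        ring_nf
    _ = ∑ i ∈ range (h + h), ψ (i % (h + h)) :=
        Function.Periodic.sum_range_add (φ := fun i => ψ (i % (h + h)))
          (fun i => by simp only [Nat.add_mod_right]) k
    _ = ∑ i ∈ range (h + h), ψ i :=
        sum_congr rfl fun i hi => by rw [Nat.mod_eq_of_lt (mem_range.mp hi)]
    _ = eval α (setPoly (univ.erase 0 : Finset (ZMod p))) := by
        rw [← biUnion_range_Dset he hf hg hpef, eval_setPoly, sum_biUnion]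
        · simp only [ψ, eval_setPoly]
        exact pairwiseDisjoint_Dset_comp he hf hg fun i hi j hj hij =>
          hij.eq_of_lt_of_lt (by simpa using hi) (by simpa using hj)
    _ = 1 := by
        rw [eval_setPoly_univ_erase_zero hα (Fact.out : p.Prime).one_lt, CharTwo.neg_eq]

theorem dvd_of_forall_Hsum_add_eq (hpef : p = e * f + 1) (hfe : Even f) {w : ℕ}
    (h : ∀ s, Hsum p g e f 1 (s + w) α = Hsum p g e f 1 s α) : f ∣ w := by
  have hg0 : (g : ZMod p) ≠ 0 := hg.ne_zero (by positivity)
  have hset : Hset p g e f w = Hset p g e f 0 := by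
    refine eq_of_forall_eval_pow_setPoly_eq hα fun j hj => ?_
    have hjval : (j : ZMod p).val = j := ZMod.val_cast_of_lt hj
    rcases eq_or_ne (j : ZMod p) 0 with hj0 | hj0
    · rw [hj0, ZMod.val_zero] at hjval
      have hcard : #(Hset p g e f w) = #(Hset p g e f 0) := by
        rw [← add_zero w, Hset_add he hf hg]
        exact card_image_of_injective _ (mul_right_injective₀ (pow_ne_zero w hg0))
      simp [← hjval, eval_setPoly, hcard]
    · obtain ⟨s, hs⟩ := exists_pow_eq_of_ne_zero he hf hg hpef hj0
      rw [← hjval, ← hs, ← Hsum_add_eq_eval he hf hg hα, ← Hsum_add_eq_eval he hf hg hα, h,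
        add_zero]
  have hf2 : 0 < f / 2 := by obtain ⟨h, rfl⟩ := hfe; omega
  have hself (k : ℕ) : (g : ZMod p) ^ k ∈ Hset p g e f k :=
    (pow_mem_Hset_iff he hf hg).mpr ⟨0, hf2, by rw [zero_add]⟩
  obtain ⟨i, hi, hwi⟩ := (pow_mem_Hset_iff he hf hg).mp (hset ▸ hself w)
  obtain ⟨i', hi', hwi'⟩ := (pow_mem_Hset_iff he hf hg).mp (hset ▸ hself 0)
  have hii' : i' + (i + 0) ≡ 0 [MOD f] := (hwi.add_left i').symm.trans hwi'.symm
  have hi0 : i = 0 := by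
    have := Nat.eq_zero_of_dvd_of_lt (Nat.modEq_zero_iff_dvd.mp hii') (by omega)
    omega
  exact Nat.modEq_zero_iff_dvd.mp (by simpa [hi0] using hwi)

variable [CharP F 2]

theorem isIdempotentElem_Hsum_of_add_two_mul (hpef : p = e * f + 1) (hfe : Even f)
    (hodd : Odd (f / 2)) {k : ℕ} (hk : IsIdempotentElem (Hsum p g e f 1 k α))
    (h2 : ∀ c, Hsum p g e f 1 (k + c * 2) α = Hsum p g e f 1 k α) (m : ℕ) :
    IsIdempotentElem (Hsum p g e f 1 m α) := by
  obtain ⟨M, hMm, hkM⟩ : ∃ M, M ≡ m [MOD f] ∧ k ≤ M :=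
    ⟨m + k * f, Nat.add_mul_mod_self_right m k f, le_add_left (Nat.le_mul_of_pos_right k hf)⟩
  rw [← Hsum_congr he hf hg hMm]
  obtain ⟨b, hb⟩ := hodd
  rcases Nat.even_or_odd (M - k) with ⟨c, hc⟩ | ⟨c, hc⟩
  · rwa [show M = k + c * 2 by omega, h2]
  · have hcompl := Hsum_add_Hsum_add_half he hf hg hα hpef hfe M
    rw [show M + f / 2 = k + (c + b + 1) * 2 by omega, h2] at hcompl
    rw [eq_sub_of_add_eq hcompl]
    exact hk.one_sub

variable {u : ℕ} (hu : (2 : ZMod p) = (g : ZMod p) ^ u)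
include hu

theorem isIdempotentElem_Hsum_iff (k : ℕ) :
    IsIdempotentElem (Hsum p g e f 1 k α) ↔ Hsum p g e f 1 (k + u) α = Hsum p g e f 1 k α := by
  rw [IsIdempotentElem, ← sq, Hsum_add_eq_sq he hf hg hα hu]

theorem Hsum_add_mul_gcd {k : ℕ} (hk : IsIdempotentElem (Hsum p g e f 1 k α)) (c : ℕ) :
    Hsum p g e f 1 (k + c * Nat.gcd u f) α = Hsum p g e f 1 k α := by
  rw [isIdempotentElem_Hsum_iff he hf hg hα hu] at hk
  have hiter (t : ℕ) : Hsum p g e f 1 (k + t * u) α = Hsum p g e f 1 k α := by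
    induction t with
    | zero => rw [zero_mul, add_zero]
    | succ t ih =>
      rw [add_mul, one_mul, ← add_assoc, Hsum_add_eq_sq he hf hg hα hu, ih,
        ← Hsum_add_eq_sq he hf hg hα hu, hk]
  obtain ⟨t, ht⟩ := Nat.exists_mul_modEq_gcd u f
  rw [Hsum_congr he hf hg ((ht.mul_left c).symm.add_left k), ← mul_assoc, hiter]

end CyclotomicClasses

theorem stmt15_general (p e f g u : ℕ) (hp : p.Prime) (hpef : p = e * f + 1)
    (he : 0 < e) (hf : 0 < f) (hfe : Even f)
    (hg : orderOf (g : ZMod p) = Nat.totient p)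
    (hu : (2 : ZMod p) = (g : ZMod p) ^ u)
    (α : AlgebraicClosure (ZMod 2)) (hα : IsPrimitiveRoot α p) :
    (Nat.gcd ((p - 1) / orderOf (2 : ZMod p)) f = f →
      ∀ k : ℕ, Hsum p g e f 1 k α + Hsum p g e f 1 (k + u) α = 0) ∧
    ((Nat.gcd ((p - 1) / orderOf (2 : ZMod p)) f ∣ f / 2 ∨
        (Nat.gcd ((p - 1) / orderOf (2 : ZMod p)) f = 2 ∧
          Nat.gcd ((p - 1) / orderOf (2 : ZMod p)) f ≠ f)) →
      ∀ k : ℕ, Hsum p g e f 1 k α + Hsum p g e f 1 (k + u) α ≠ 0) := by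
  have := Fact.mk hp
  have hef : p - 1 = e * f := by omega
  have hg' : IsPrimitiveRoot (g : ZMod p) (e * f) := by
    rw [← hef, ← Nat.totient_prime hp, ← hg]
    exact IsPrimitiveRoot.orderOf _
  have hv : Nat.gcd ((p - 1) / orderOf (2 : ZMod p)) f = Nat.gcd u f := by
    rw [hu, hef]
    exact hg'.gcd_div_orderOf_pow (by positivity) (dvd_mul_left f e) u
  rw [hv]
  refine ⟨fun hvf k => ?_, fun hcase k hsum => ?_⟩
  · have hfu : k + u ≡ k + 0 [MOD f] :=
      (Nat.modEq_zero_iff_dvd.mpr (hvf ▸ Nat.gcd_dvd_left u f)).add_left k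
    rw [Hsum_congr he hf hg' hfu, add_zero, CharTwo.add_self_eq_zero]
  have hk : IsIdempotentElem (Hsum p g e f 1 k α) :=
    (isIdempotentElem_Hsum_iff he hf hg' hα hu k).mpr (CharTwo.add_eq_zero.mp hsum).symm
  have hstab := Hsum_add_mul_gcd he hf hg' hα hu hk
  have hnot_half : ¬ Nat.gcd u f ∣ f / 2 := by
    rintro ⟨c, hc⟩
    have hcompl := Hsum_add_Hsum_add_half he hf hg' hα hpef hfe k
    rw [hc, mul_comm, hstab, CharTwo.add_self_eq_zero] at hcompl
    exact zero_ne_one hcompl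
  rcases hcase with hdvd | ⟨hv2, hvf⟩
  · exact hnot_half hdvd
  have hodd2 : Odd (f / 2) := Nat.odd_iff.mpr (by rw [hv2] at hnot_half; omega)
  rw [hv2] at hstab
  have hidem := isIdempotentElem_Hsum_of_add_two_mul he hf hg' hα hpef hfe hodd2 hk hstab
  have hfu := dvd_of_forall_Hsum_add_eq he hf hg' hα hpef hfe fun s =>
    (isIdempotentElem_Hsum_iff he hf hg' hα hu s).mp (hidem s)
  exact hvf (Nat.gcd_eq_right hfu)

/-- If `v = f` then `H_k^{(p)}(α_1) + H_{k+u}^{(p)}(α_1) = 0` for all `k`; if `v ∣ f/2`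
or `v = 2, v ≠ f`, then `H_k^{(p)}(α_1) + H_{k+u}^{(p)}(α_1) ≠ 0` for all `k`. -/
theorem stmt15 (p e f g u : ℕ) (hp : p.Prime) (hodd : Odd p) (hpef : p = e * f + 1)
    (he : 0 < e) (hf : 0 < f) (hfe : Even f)
    (hg : orderOf (g : ZMod p) = Nat.totient p)
    (hu : (2 : ZMod p) = (g : ZMod p) ^ u)
    (α : AlgebraicClosure (ZMod 2)) (hα : IsPrimitiveRoot α p) :
    (Nat.gcd ((p - 1) / orderOf (2 : ZMod p)) f = f →
      ∀ k : ℕ, Hsum p g e f 1 k α + Hsum p g e f 1 (k + u) α = 0) ∧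
    ((Nat.gcd ((p - 1) / orderOf (2 : ZMod p)) f ∣ f / 2 ∨
        (Nat.gcd ((p - 1) / orderOf (2 : ZMod p)) f = 2 ∧
          Nat.gcd ((p - 1) / orderOf (2 : ZMod p)) f ≠ f)) →
      ∀ k : ℕ, Hsum p g e f 1 k α + Hsum p g e f 1 (k + u) α ≠ 0) :=
  stmt15_general p e f g u hp hpef he hf hfe hg hu α hα
end
end
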